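/- arXiv:2109.01233 — 2 statements merged into one kernel-verified Lean document; each statement's English description precedes it below -/
import Mathlib

section
/- Let G be a triconed graph with no coloops and let B be a spanning tree of G. An edge e ∈ B is internally active if and only if one of the following holds: (i) e = 01; (ii) e = 02 and φ1(B) has no doubly marked vertex; (iii) e ∈ B ∩ B0 \ {01, 02} and the child v of e is a marked vertex of φ1(B) that is the unique marked vertex of its component and is the smallest vertex of that component in the vertex order. In particular, every edge of B \ B0 is internally passive. -/
attribute [-instance] Sym2.instPartialOrder

open scoped Classical

variable {V : Type} [Fintype V] [LinearOrder V] [LinearOrder (Sym2 V)]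

/-- `T` is a spanning tree of the graph `G`, viewed as a set of edges. -/
def IsSpanningTree (G : SimpleGraph V) (T : Set (Sym2 V)) : Prop :=
  T ⊆ G.edgeSet ∧ (SimpleGraph.fromEdgeSet T).IsTree

/-- An edge `e` of the spanning tree `T` is internally passive (w.r.t. the edge order). -/
def InternallyPassive (G : SimpleGraph V) (T : Set (Sym2 V)) (e : Sym2 V) : Prop :=
  e ∈ T ∧ ∃ f ∈ G.edgeSet, f ∉ T ∧ f < e ∧ IsSpanningTree G (insert f (T \ {e}))

/-- The passivity of a spanning tree: the number of internally passive edges. -/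
noncomputable def passivity (G : SimpleGraph V) (T : Set (Sym2 V)) : ℕ :=
  {e : Sym2 V | InternallyPassive G T e}.ncard

/-- `A` is lexicographically smaller than `B` as (sorted lists of) sets of edges:
the minimum of the symmetric difference lies in `A`. -/
def EdgeSetLexLt (A B : Set (Sym2 V)) : Prop :=
  ∃ e, e ∈ A ∧ e ∉ B ∧ ∀ f, (f ∈ A ∧ f ∉ B) ∨ (f ∈ B ∧ f ∉ A) → f ≠ e → e < f

/-- `B0` is the minimum spanning tree of `G`: the spanning tree whose sorted edge
list is lexicographically smallest. -/
def IsMinSpanningTree (G : SimpleGraph V) (B0 : Set (Sym2 V)) : Prop :=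
  IsSpanningTree G B0 ∧ ∀ T, IsSpanningTree G T → T ≠ B0 → EdgeSetLexLt B0 T

/-- `G` has no coloops: every edge lies outside some spanning tree. -/
def NoColoops (G : SimpleGraph V) : Prop :=
  ∀ e ∈ G.edgeSet, ∃ T, IsSpanningTree G T ∧ e ∉ T

/-- `G` is a triconed graph with distinguished path `v1 - v0 - v2`. -/
def IsTriconed (G : SimpleGraph V) (v0 v1 v2 : V) : Prop :=
  G.Connected ∧ v0 ≠ v1 ∧ v0 ≠ v2 ∧ v1 ≠ v2 ∧ G.Adj v0 v1 ∧ G.Adj v0 v2 ∧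
    ∀ v, v ≠ v0 → v ≠ v1 → v ≠ v2 → G.Adj v0 v ∨ G.Adj v1 v ∨ G.Adj v2 v

/-- The vertex order puts `v0 < v1 < v2` first, then the remaining neighbors of `v0`,
then the remaining vertices adjacent to `v1`, then the rest. -/
def VertexOrderSpec (G : SimpleGraph V) (v0 v1 v2 : V) : Prop :=
  v0 < v1 ∧ v1 < v2 ∧
  (∀ v, v ≠ v0 → v ≠ v1 → v ≠ v2 → v2 < v) ∧
  (∀ u u', u ≠ v0 → u ≠ v1 → u ≠ v2 → u' ≠ v0 → u' ≠ v1 → u' ≠ v2 →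
    G.Adj v0 u → ¬G.Adj v0 u' → u < u') ∧
  (∀ u u', u ≠ v0 → u ≠ v1 → u ≠ v2 → u' ≠ v0 → u' ≠ v1 → u' ≠ v2 →
    ¬G.Adj v0 u → ¬G.Adj v0 u' → G.Adj v1 u → ¬G.Adj v1 u' → u < u')

/-- Smaller endpoint of an edge. -/
def sym2Min (e : Sym2 V) : V :=
  Sym2.lift ⟨fun a b => min a b, fun a b => min_comm a b⟩ e

/-- Larger endpoint of an edge. -/
def sym2Max (e : Sym2 V) : V :=
  Sym2.lift ⟨fun a b => max a b, fun a b => max_comm a b⟩ e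

/-- Lexicographic comparison of edges by their endpoints. -/
def Sym2Lex (e f : Sym2 V) : Prop :=
  sym2Min e < sym2Min f ∨ (sym2Min e = sym2Min f ∧ sym2Max e < sym2Max f)

/-- The block of an edge in the specified edge ordering: edges at `v0` first, then edges
joining `v1` to height-2 vertices, then edges joining `v2` to height-2 vertices not
adjacent to `v1`, then the remaining edges. -/
noncomputable def edgeBlock (G : SimpleGraph V) (v0 v1 v2 : V) (e : Sym2 V) : ℕ :=
  if v0 ∈ e then 0
  else if ∃ x, e = s(v1, x) ∧ ¬G.Adj v0 x then 1
  else if ∃ x, e = s(v2, x) ∧ ¬G.Adj v0 x ∧ ¬G.Adj v1 x then 2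
  else 3

/-- The edge order respects the blocks, and is lexicographic within the first three blocks. -/
def EdgeOrderSpec (G : SimpleGraph V) (v0 v1 v2 : V) : Prop :=
  (∀ e ∈ G.edgeSet, ∀ f ∈ G.edgeSet,
      edgeBlock G v0 v1 v2 e < edgeBlock G v0 v1 v2 f → e < f) ∧
  (∀ e ∈ G.edgeSet, ∀ f ∈ G.edgeSet,
      edgeBlock G v0 v1 v2 e = edgeBlock G v0 v1 v2 f → edgeBlock G v0 v1 v2 e ≤ 2 →
      Sym2Lex e f → e < f)

/-- The edges of `G_red`: edges of `G` not in `B0` and not incident to `v0`. -/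
def GredEdges (G : SimpleGraph V) (v0 : V) (B0 : Set (Sym2 V)) : Set (Sym2 V) :=
  {e | e ∈ G.edgeSet ∧ e ∉ B0 ∧ v0 ∉ e}

/-- `u` is a child of `p` in the spanning tree `B0` rooted at `v0`:
`s(u,p) ∈ B0` and removing this edge disconnects `u` from the root. -/
def IsChildOf (B0 : Set (Sym2 V)) (v0 : V) (u p : V) : Prop :=
  s(u, p) ∈ B0 ∧ ¬(SimpleGraph.fromEdgeSet (B0 \ {s(u, p)})).Reachable u v0

/-- The type of a vertex: `1` if it is `v1` or a child of `v1`, `2` if it is `v2` or a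
child of `v2`, and `0` otherwise. -/
noncomputable def vType (B0 : Set (Sym2 V)) (v0 v1 v2 : V) (u : V) : ℕ :=
  if u = v1 ∨ IsChildOf B0 v0 u v1 then 1
  else if u = v2 ∨ IsChildOf B0 v0 u v2 then 2
  else 0

/-- The height of a vertex other than `v0`: `1` if adjacent to `v0`, `2` otherwise. -/
noncomputable def vHeight (G : SimpleGraph V) (v0 : V) (u : V) : ℕ :=
  if G.Adj v0 u then 1 else 2

/-- `(E, m)` is a marked spanning forest of `G_red`: an acyclic set of `G_red`-edges
with marks on vertices, each vertex carrying at most one mark except type-2 vertices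
which may carry two. -/
def IsMarkedForest (G : SimpleGraph V) (v0 v1 v2 : V) (B0 : Set (Sym2 V))
    (E : Set (Sym2 V)) (m : V → ℕ) : Prop :=
  E ⊆ GredEdges G v0 B0 ∧ (SimpleGraph.fromEdgeSet E).IsAcyclic ∧ m v0 = 0 ∧
  ∀ v, m v ≤ if vType B0 v0 v1 v2 v = 2 then 2 else 1

/-- Total number of marks in the component of `u`. -/
noncomputable def compMarks (E : Set (Sym2 V)) (m : V → ℕ) (u : V) : ℕ :=
  ∑ x : V, if (SimpleGraph.fromEdgeSet E).Reachable u x then m x else 0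

/-- Number of marks of type `t` in the component of `u` (the extra mark of a doubly
marked vertex counting as a mark of type `0`). -/
noncomputable def markTypeCount (B0 : Set (Sym2 V)) (v0 v1 v2 : V)
    (E : Set (Sym2 V)) (m : V → ℕ) (u : V) (t : ℕ) : ℕ :=
  ∑ x : V, if (SimpleGraph.fromEdgeSet E).Reachable u x then
      ((if 1 ≤ m x ∧ vType B0 v0 v1 v2 x = t then 1 else 0) +
        (if m x = 2 ∧ t = 0 then 1 else 0))
    else 0

/-- The component of `u` in `(E, m)` is correctly marked. -/
def CorrectlyMarkedComp (B0 : Set (Sym2 V)) (v0 v1 v2 : V)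
    (E : Set (Sym2 V)) (m : V → ℕ) (u : V) : Prop :=
  1 ≤ compMarks E m u ∧
  ((SimpleGraph.fromEdgeSet E).Reachable u v1 → 1 ≤ m v1) ∧
  ((SimpleGraph.fromEdgeSet E).Reachable u v2 → 1 ≤ m v2) ∧
  (∀ t, markTypeCount B0 v0 v1 v2 E m u t ≤ 1) ∧
  (∀ x, (SimpleGraph.fromEdgeSet E).Reachable u x → m x = 2 →
    ∃ x', (SimpleGraph.fromEdgeSet E).Reachable u x' ∧ x' ≠ x ∧ 1 ≤ m x')

/-- The multiplicity of the blueprint edge `{a, b}`: the number of 2-components whose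
marks have types `a` and `b`, plus (for `{a,b} ∈ {{0,1},{0,2}}`) the number of
3-components. -/
noncomputable def bpMult (B0 : Set (Sym2 V)) (v0 v1 v2 : V)
    (E : Set (Sym2 V)) (m : V → ℕ) (a b : ℕ) : ℕ :=
  {c : (SimpleGraph.fromEdgeSet E).ConnectedComponent |
    ∃ u, u ≠ v0 ∧ (SimpleGraph.fromEdgeSet E).connectedComponentMk u = c ∧
      ((compMarks E m u = 2 ∧ a ≠ b ∧
          1 ≤ markTypeCount B0 v0 v1 v2 E m u a ∧ 1 ≤ markTypeCount B0 v0 v1 v2 E m u b) ∨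
        (compMarks E m u = 3 ∧
          (({a, b} : Set ℕ) = {0, 1} ∨ ({a, b} : Set ℕ) = {0, 2})))}.ncard

/-- The blueprint (a multigraph on `{0,1,2}`) is acyclic. -/
def bpAcyclic (B0 : Set (Sym2 V)) (v0 v1 v2 : V) (E : Set (Sym2 V)) (m : V → ℕ) : Prop :=
  bpMult B0 v0 v1 v2 E m 0 1 ≤ 1 ∧ bpMult B0 v0 v1 v2 E m 0 2 ≤ 1 ∧
  bpMult B0 v0 v1 v2 E m 1 2 ≤ 1 ∧
  ¬(1 ≤ bpMult B0 v0 v1 v2 E m 0 1 ∧ 1 ≤ bpMult B0 v0 v1 v2 E m 0 2 ∧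
      1 ≤ bpMult B0 v0 v1 v2 E m 1 2)

/-- The vertices `a` and `b` of the blueprint lie in the same connected component. -/
def bpConnected (B0 : Set (Sym2 V)) (v0 v1 v2 : V) (E : Set (Sym2 V)) (m : V → ℕ)
    (a b : ℕ) : Prop :=
  a = b ∨ 1 ≤ bpMult B0 v0 v1 v2 E m a b ∨
    ∃ c, c ∈ ({0, 1, 2} : Set ℕ) ∧ c ≠ a ∧ c ≠ b ∧
      1 ≤ bpMult B0 v0 v1 v2 E m a c ∧ 1 ≤ bpMult B0 v0 v1 v2 E m c b

/-- `(E, m)` is a trirooted forest of `G_red`. -/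
def IsTriRootedForest (G : SimpleGraph V) (v0 v1 v2 : V) (B0 : Set (Sym2 V))
    (E : Set (Sym2 V)) (m : V → ℕ) : Prop :=
  IsMarkedForest G v0 v1 v2 B0 E m ∧
  (∀ u, u ≠ v0 → CorrectlyMarkedComp B0 v0 v1 v2 E m u) ∧
  bpAcyclic B0 v0 v1 v2 E m

/-- `v` receives the extra mark coming from the edge `02`: `02 ∈ B`, there is a path
from `v2` to `v1` in `B` avoiding `02`, and `v` is the endpoint closer to `v2` of the
first edge of this path not in `B0`. -/
def DoublyMarkedAt (B0 B : Set (Sym2 V)) (v0 v1 v2 : V) (v : V) : Prop :=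
  s(v0, v2) ∈ B ∧
  ∃ p : (SimpleGraph.fromEdgeSet B).Walk v2 v1, p.IsPath ∧ s(v0, v2) ∉ p.edges ∧
    ∃ i : ℕ, (∀ j < i, ∀ e, p.edges[j]? = some e → e ∈ B0) ∧
      (∃ e, p.edges[i]? = some e ∧ e ∉ B0) ∧ v = p.getVert i

/-- `(E, m)` is the marked spanning forest `φ₁(B)` associated to the spanning tree `B`. -/
def IsPhi1 (G : SimpleGraph V) (v0 v1 v2 : V) (B0 B : Set (Sym2 V))
    (E : Set (Sym2 V)) (m : V → ℕ) : Prop :=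
  E = B ∩ GredEdges G v0 B0 ∧
  (∀ v, m v ≤ 2) ∧
  (∀ v, 1 ≤ m v ↔ (v = v1 ∨ v = v2 ∨ ∃ p, IsChildOf B0 v0 v p ∧ s(v, p) ∈ B)) ∧
  (∀ v, m v = 2 ↔ DoublyMarkedAt B0 B v0 v1 v2 v)

/-- `(S, E)` is a (sub)tree of `G_red` with vertex set `S` and edge set `E`. -/
def IsSubTree (G : SimpleGraph V) (v0 : V) (B0 : Set (Sym2 V))
    (S : Set V) (E : Set (Sym2 V)) : Prop :=
  S.Nonempty ∧ v0 ∉ S ∧ E ⊆ GredEdges G v0 B0 ∧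
  (∀ e ∈ E, ∀ x ∈ e, x ∈ S) ∧
  (∀ u ∈ S, ∀ x ∈ S, (SimpleGraph.fromEdgeSet E).Reachable u x) ∧
  (SimpleGraph.fromEdgeSet E).IsAcyclic

/-- Total number of marks of the marked tree `(S, m)`. -/
noncomputable def treeTotalMarks (S : Set V) (m : V → ℕ) : ℕ :=
  ∑ x : V, if x ∈ S then m x else 0

/-- Number of marks of type `t` of the marked tree `(S, m)`. -/
noncomputable def treeMarkTypeCount (B0 : Set (Sym2 V)) (v0 v1 v2 : V)
    (S : Set V) (m : V → ℕ) (t : ℕ) : ℕ :=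
  ∑ x : V, if x ∈ S then
      ((if 1 ≤ m x ∧ vType B0 v0 v1 v2 x = t then 1 else 0) +
        (if m x = 2 ∧ t = 0 then 1 else 0))
    else 0

/-- `(S, E, m)` is a correctly marked tree of `G_red`. -/
def IsCorrectlyMarkedTree (G : SimpleGraph V) (v0 v1 v2 : V) (B0 : Set (Sym2 V))
    (S : Set V) (E : Set (Sym2 V)) (m : V → ℕ) : Prop :=
  IsSubTree G v0 B0 S E ∧
  (∀ v, v ∉ S → m v = 0) ∧
  (∀ v, m v ≤ if vType B0 v0 v1 v2 v = 2 then 2 else 1) ∧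
  1 ≤ treeTotalMarks S m ∧
  (v1 ∈ S → 1 ≤ m v1) ∧ (v2 ∈ S → 1 ≤ m v2) ∧
  (∀ t, treeMarkTypeCount B0 v0 v1 v2 S m t ≤ 1) ∧
  (∀ x ∈ S, m x = 2 → ∃ x' ∈ S, x' ≠ x ∧ 1 ≤ m x')

/-- Number of effective marks: marks at normal vertices together with the extra marks
of doubly marked vertices. -/
noncomputable def effMarks (v1 v2 : V) (S : Set V) (m : V → ℕ) : ℕ :=
  treeTotalMarks S m -
    ((if v1 ∈ S ∧ 1 ≤ m v1 then 1 else 0) + (if v2 ∈ S ∧ 1 ≤ m v2 then 1 else 0))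

/-- Number of passive effective marks: an effective mark is passive unless it is the
unique mark of the tree and lies at the smallest vertex of the tree. -/
noncomputable def passiveEffMarks (v1 v2 : V) (S : Set V) (m : V → ℕ) : ℕ :=
  effMarks v1 v2 S m -
    (if ∃ v ∈ S, v ≠ v1 ∧ v ≠ v2 ∧ 1 ≤ m v ∧ treeTotalMarks S m = 1 ∧ ∀ u ∈ S, v ≤ u
      then 1 else 0)

/-- Total excess `Σ_{e ∈ E} (w e - 1)` of the edge weights. -/
noncomputable def excessWeightSum (E : Set (Sym2 V)) (w : Sym2 V → ℕ) : ℕ :=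
  ∑ e : Sym2 V, if e ∈ E then w e - 1 else 0

/-- Excess weight of the weighted tree `(S, E, w)`. -/
noncomputable def excessWeight (v1 v2 : V) (S : Set V) (E : Set (Sym2 V))
    (w : Sym2 V → ℕ) : ℕ :=
  (if v1 ∈ S then 1 else 0) + (if v2 ∈ S then 1 else 0) + excessWeightSum E w

/-- Total weight `Σ_{e ∈ E} w e`, i.e. the total degree of the associated monomial. -/
noncomputable def totalWeight (E : Set (Sym2 V)) (w : Sym2 V → ℕ) : ℕ :=
  ∑ e : Sym2 V, if e ∈ E then w e else 0

/-- All pairs of weighted objects of the weighted tree `(S, E, w)` are compatible: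
the endpoints of the smallest path containing any two weighted objects have
different types. -/
def WeightedObjectsCompatible (B0 : Set (Sym2 V)) (v0 v1 v2 : V)
    (S : Set V) (E : Set (Sym2 V)) (w : Sym2 V → ℕ) : Prop :=
  (∀ vsp ∈ ({v1, v2} : Set V), vsp ∈ S → ∀ x y, s(x, y) ∈ E → 2 ≤ w s(x, y) →
      (SimpleGraph.fromEdgeSet (E \ {s(x, y)})).Reachable vsp x →
      vType B0 v0 v1 v2 vsp ≠ vType B0 v0 v1 v2 y) ∧
  (∀ x y p q, s(x, y) ∈ E → s(p, q) ∈ E → s(x, y) ≠ s(p, q) →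
      2 ≤ w s(x, y) → 2 ≤ w s(p, q) →
      (SimpleGraph.fromEdgeSet (E \ {s(x, y)})).Reachable x p →
      (SimpleGraph.fromEdgeSet (E \ {s(p, q)})).Reachable p x →
      vType B0 v0 v1 v2 y ≠ vType B0 v0 v1 v2 q) ∧
  (∀ x y, s(x, y) ∈ E → 3 ≤ w s(x, y) → vType B0 v0 v1 v2 x ≠ vType B0 v0 v1 v2 y)

/-- `(S, E, w)` is a correctly weighted tree of `G_red`. -/
def IsCorrectlyWeightedTree (G : SimpleGraph V) (v0 v1 v2 : V) (B0 : Set (Sym2 V))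
    (S : Set V) (E : Set (Sym2 V)) (w : Sym2 V → ℕ) : Prop :=
  IsSubTree G v0 B0 S E ∧
  (∀ e ∈ E, 1 ≤ w e) ∧
  excessWeight v1 v2 S E w ≤ 3 ∧
  (2 ≤ excessWeight v1 v2 S E w → WeightedObjectsCompatible B0 v0 v1 v2 S E w) ∧
  (∀ x y, s(x, y) ∈ E → w s(x, y) ≤ vHeight G v0 x + vHeight G v0 y) ∧
  (∀ x y, s(x, y) ∈ E → w s(x, y) = vHeight G v0 x + vHeight G v0 y →
    ∀ e ∈ E, e ≠ s(x, y) → w e ≤ 2)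

/-- `s(v, x)` is the edge incident to `v` on the unique path from `v` to `u` in the
tree with edge set `E`. -/
def PathFirstEdge (E : Set (Sym2 V)) (v u : V) (x : V) : Prop :=
  s(v, x) ∈ E ∧ ¬(SimpleGraph.fromEdgeSet (E \ {s(v, x)})).Reachable v u

/-- `z` lies on the (unique) path between `a` and `b` in the forest with edge set `E`. -/
def OnPathBetween (E : Set (Sym2 V)) (a b z : V) : Prop :=
  ∃ p : (SimpleGraph.fromEdgeSet E).Walk a b, p.IsPath ∧ z ∈ p.support

/-- `s(x, y)` (with `x` nearer `z`, `y` nearer `v`) is the first edge along the path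
from the sandwiched mark `z` towards `v` whose endpoint closer to `v` has type
different from that of `wv` and whose endpoint closer to `wv` has type different
from that of `v`. -/
def SandwichEdge (B0 : Set (Sym2 V)) (v0 v1 v2 : V) (E : Set (Sym2 V))
    (z v wv : V) (x y : V) : Prop :=
  s(x, y) ∈ E ∧
  ¬(SimpleGraph.fromEdgeSet (E \ {s(x, y)})).Reachable z v ∧
  (SimpleGraph.fromEdgeSet (E \ {s(x, y)})).Reachable z x ∧
  vType B0 v0 v1 v2 y ≠ vType B0 v0 v1 v2 wv ∧
  vType B0 v0 v1 v2 x ≠ vType B0 v0 v1 v2 v ∧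
  ∀ x' y', s(x', y') ∈ E →
    ¬(SimpleGraph.fromEdgeSet (E \ {s(x', y')})).Reachable z x →
    (SimpleGraph.fromEdgeSet (E \ {s(x', y')})).Reachable z x' →
    (vType B0 v0 v1 v2 y' = vType B0 v0 v1 v2 wv ∨ vType B0 v0 v1 v2 x' = vType B0 v0 v1 v2 v)

/-- `w` is the weighting `φ₂(S, E, m)` produced by the empowerment algorithm applied
to the correctly marked tree `(S, E, m)` (only the weights of edges of `E` are
constrained). -/
def IsPhi2 (B0 : Set (Sym2 V)) (v0 v1 v2 : V)
    (S : Set V) (E : Set (Sym2 V)) (m : V → ℕ) (w : Sym2 V → ℕ) : Prop :=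
  (treeTotalMarks S m = 1 →
    ∃ v ∈ S, m v = 1 ∧
      (((∀ u ∈ S, v ≤ u) ∧ ∀ e ∈ E, w e = 1) ∨
        (¬(∀ u ∈ S, v ≤ u) ∧ ∃ u0 ∈ S, (∀ u ∈ S, u0 ≤ u) ∧
          ∃ x, PathFirstEdge E v u0 x ∧ ∀ e ∈ E, w e = if e = s(v, x) then 2 else 1))) ∧
  (treeTotalMarks S m = 2 →
    ∃ v ∈ S, ∃ u ∈ S, v ≠ u ∧ m v = 1 ∧ m u = 1 ∧
      ∃ x y, PathFirstEdge E v u x ∧ PathFirstEdge E u v y ∧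
        ∀ e ∈ E, w e = 1 + (if v ≠ v1 ∧ v ≠ v2 ∧ e = s(v, x) then 1 else 0)
                        + (if u ≠ v1 ∧ u ≠ v2 ∧ e = s(u, y) then 1 else 0)) ∧
  (treeTotalMarks S m = 3 →
    ((∃ a ∈ S, ∃ b ∈ S, ∃ c ∈ S, a ≠ b ∧ a ≠ c ∧ b ≠ c ∧ m a = 1 ∧ m b = 1 ∧ m c = 1 ∧
        ¬OnPathBetween E b c a ∧ ¬OnPathBetween E a c b ∧ ¬OnPathBetween E a b c ∧
        ∃ xa xb xc, PathFirstEdge E a b xa ∧ PathFirstEdge E b a xb ∧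
          PathFirstEdge E c a xc ∧
          ∀ e ∈ E, w e = 1 + (if a ≠ v1 ∧ a ≠ v2 ∧ e = s(a, xa) then 1 else 0)
                          + (if b ≠ v1 ∧ b ≠ v2 ∧ e = s(b, xb) then 1 else 0)
                          + (if c ≠ v1 ∧ c ≠ v2 ∧ e = s(c, xc) then 1 else 0)) ∨
      (∃ v ∈ S, ∃ wv ∈ S, ∃ z ∈ S, v ≠ wv ∧ v ≠ z ∧ 1 ≤ m v ∧ 1 ≤ m wv ∧ 1 ≤ m z ∧
        OnPathBetween E v wv z ∧ (z = wv → m wv = 2) ∧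
        (z ≠ wv → m v = 1 ∧ m wv = 1 ∧ m z = 1) ∧
        vType B0 v0 v1 v2 v < vType B0 v0 v1 v2 wv ∧
        ∃ xv xw xz yz, PathFirstEdge E v wv xv ∧ PathFirstEdge E wv v xw ∧
          SandwichEdge B0 v0 v1 v2 E z v wv xz yz ∧
          ∀ e ∈ E, w e = 1 + (if v ≠ v1 ∧ v ≠ v2 ∧ e = s(v, xv) then 1 else 0)
                          + (if wv ≠ v1 ∧ wv ≠ v2 ∧ e = s(wv, xw) then 1 else 0)
                          + (if e = s(xz, yz) then 1 else 0))))

/-- The vertex set of the component of `u` in the forest with edge set `E`. -/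
def compVerts (E : Set (Sym2 V)) (u : V) : Set V :=
  {x | (SimpleGraph.fromEdgeSet E).Reachable u x}

/-- The edge set of the component of `u` in the forest with edge set `E`. -/
def compEdges (E : Set (Sym2 V)) (u : V) : Set (Sym2 V) :=
  {e | e ∈ E ∧ ∀ x ∈ e, (SimpleGraph.fromEdgeSet E).Reachable u x}

/-- `w` is the weighting `φ₂(E, m)` of the marked forest `(E, m)`, obtained by applying
the empowerment algorithm to every component. -/
def IsPhi2Forest (B0 : Set (Sym2 V)) (v0 v1 v2 : V)
    (E : Set (Sym2 V)) (m : V → ℕ) (w : Sym2 V → ℕ) : Prop :=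
  ∀ u, u ≠ v0 → IsPhi2 B0 v0 v1 v2 (compVerts E u) (compEdges E u)
      (fun v => if v ∈ compVerts E u then m v else 0) w

/-- `(h_0, …, h_r)` is a pure O-sequence. -/
def IsPureOSeq (r : ℕ) (h : ℕ → ℕ) : Prop :=
  ∃ (σ : Type) (_ : Finite σ) (X : Set (σ →₀ ℕ)),
    X.Finite ∧
    (∀ μ ∈ X, ∀ ν : σ →₀ ℕ, ν ≤ μ → ν ∈ X) ∧
    (∀ μ ∈ X, ∀ ν ∈ X, (∀ ρ ∈ X, μ ≤ ρ → ρ = μ) → (∀ ρ ∈ X, ν ≤ ρ → ρ = ν) →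
        μ.sum (fun _ n => n) = ν.sum (fun _ n => n)) ∧
    (∀ i, {μ ∈ X | μ.sum (fun _ n => n) = i}.ncard = if i ≤ r then h i else 0)

namespace St10
set_option linter.unusedSectionVars false
open SimpleGraph

variable {V : Type} [Fintype V] [LinearOrder V] [LinearOrder (Sym2 V)]

lemma ne_of_mem_edges {G : SimpleGraph V} {T : Set (Sym2 V)} (hT : T ⊆ G.edgeSet)
    {a b : V} (h : s(a,b) ∈ T) : a ≠ b := by
  intro hab
  subst hab
  exact G.not_isDiag_of_mem_edgeSet (hT h) (Sym2.mk_isDiag_iff.mpr rfl)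

lemma walk_ind {S : Set (Sym2 V)} (P : V → Prop)
    (hP : ∀ a b, s(a,b) ∈ S → a ≠ b → P a → P b) :
    ∀ {u z : V}, (fromEdgeSet S).Walk u z → P u → P z := by
  intro u z w
  induction w with
  | nil => exact id
  | cons h q ih =>
    intro hu
    exact ih (hP _ _ ((fromEdgeSet_adj _).mp h).1 h.ne hu)

lemma reach_ind {S : Set (Sym2 V)} (P : V → Prop)
    (hP : ∀ a b, s(a,b) ∈ S → a ≠ b → P a → P b) {u z : V}
    (h : (fromEdgeSet S).Reachable u z) (hu : P u) : P z := by
  obtain ⟨w⟩ := h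
  exact walk_ind P hP w hu

lemma walk_cross {S : Set (Sym2 V)} (Q : V → Prop) :
    ∀ {u z : V}, (fromEdgeSet S).Walk u z → Q u → ¬ Q z →
      ∃ c d, s(c,d) ∈ S ∧ c ≠ d ∧ Q c ∧ ¬ Q d := by
  intro u z w
  induction w with
  | nil => intro h h2; exact absurd h h2
  | @cons u w z h q ih =>
    intro hu hz
    by_cases hq : Q w
    · exact ih hq hz
    · exact ⟨_, _, ((fromEdgeSet_adj _).mp h).1, h.ne, hu, hq⟩

lemma reach_cross {S : Set (Sym2 V)} (Q : V → Prop) {u z : V}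
    (h : (fromEdgeSet S).Reachable u z) (hu : Q u) (hz : ¬ Q z) :
    ∃ c d, s(c,d) ∈ S ∧ c ≠ d ∧ Q c ∧ ¬ Q d := by
  obtain ⟨w⟩ := h
  exact walk_cross Q w hu hz

lemma edgeSet_fromEdgeSet_eq {G : SimpleGraph V} {T : Set (Sym2 V)} (hT : T ⊆ G.edgeSet) :
    (fromEdgeSet T).edgeSet = T := by
  rw [edgeSet_fromEdgeSet]
  ext e
  refine ⟨fun h => h.1, fun h => ⟨h, fun hd => G.not_isDiag_of_mem_edgeSet (hT h) hd⟩⟩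

lemma acyclic_del {S : Set (Sym2 V)} (hac : (fromEdgeSet S).IsAcyclic) {x y : V}
    (hxy : s(x,y) ∈ S) (hne : x ≠ y) :
    ¬ (fromEdgeSet (S \ {s(x,y)})).Reachable x y := by
  rintro ⟨w⟩
  have hsub : ∀ e ∈ (w.toPath : (fromEdgeSet (S \ {s(x,y)})).Walk x y).edges,
      e ∈ (fromEdgeSet S).edgeSet := by
    intro e he
    have := (w.toPath : (fromEdgeSet (S \ {s(x,y)})).Walk x y).edges_subset_edgeSet he
    rw [edgeSet_fromEdgeSet] at this ⊢
    exact ⟨this.1.1, this.2⟩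
  have hp : ((w.toPath : (fromEdgeSet (S \ {s(x,y)})).Walk x y).transfer _ hsub).IsPath :=
    (w.toPath.2).transfer hsub
  have hadj : (fromEdgeSet S).Adj y x := (fromEdgeSet_adj _).mpr ⟨by rwa [Sym2.eq_swap], hne.symm⟩
  have hne' : s(y,x) ∉ ((w.toPath : (fromEdgeSet (S \ {s(x,y)})).Walk x y).transfer _ hsub).edges := by
    rw [SimpleGraph.Walk.edges_transfer]
    intro hmem
    have := (w.toPath : (fromEdgeSet (S \ {s(x,y)})).Walk x y).edges_subset_edgeSet hmem
    rw [edgeSet_fromEdgeSet] at this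
    exact this.1.2 (by rw [Sym2.eq_swap]; rfl)
  exact hac _ (SimpleGraph.Path.cons_isCycle ⟨_, hp⟩ hadj hne')

end St10
namespace St10
set_option linter.unusedSectionVars false
open SimpleGraph

variable {V : Type} [Fintype V] [LinearOrder V] [LinearOrder (Sym2 V)]

/-- both endpoints of a tree edge can't reach a common vertex after deletion -/
lemma sides_disjoint {S : Set (Sym2 V)} (hac : (fromEdgeSet S).IsAcyclic) {a b : V}
    (he : s(a,b) ∈ S) (hne : a ≠ b) {z : V}
    (ha : (fromEdgeSet (S \ {s(a,b)})).Reachable a z)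
    (hb : (fromEdgeSet (S \ {s(a,b)})).Reachable b z) : False :=
  acyclic_del hac he hne (ha.trans hb.symm)

lemma reach_or {B : Set (Sym2 V)} (hc : (fromEdgeSet B).Preconnected) {a b : V}
    (he : s(a,b) ∈ B) (z : V) :
    (fromEdgeSet (B \ {s(a,b)})).Reachable a z ∨ (fromEdgeSet (B \ {s(a,b)})).Reachable b z := by
  obtain ⟨w⟩ := hc a z
  refine walk_ind (fun t => (fromEdgeSet (B \ {s(a,b)})).Reachable a t ∨
    (fromEdgeSet (B \ {s(a,b)})).Reachable b t) ?_ w (Or.inl (Reachable.refl a))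
  rintro c d hcd hne (hC | hC)
  · by_cases hcde : s(c,d) = s(a,b)
    · rcases Sym2.eq_iff.mp hcde with ⟨rfl, rfl⟩ | ⟨rfl, rfl⟩
      · exact Or.inr (Reachable.refl _)
      · exact Or.inl (Reachable.refl _)
    · exact Or.inl (hC.trans (Adj.reachable ((fromEdgeSet_adj _).mpr ⟨⟨hcd, hcde⟩, hne⟩)))
  · by_cases hcde : s(c,d) = s(a,b)
    · rcases Sym2.eq_iff.mp hcde with ⟨rfl, rfl⟩ | ⟨rfl, rfl⟩
      · exact Or.inr (Reachable.refl _)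
      · exact Or.inl (Reachable.refl _)
    · exact Or.inr (hC.trans (Adj.reachable ((fromEdgeSet_adj _).mpr ⟨⟨hcd, hcde⟩, hne⟩)))

lemma isBridge_of_not_reach {S : Set (Sym2 V)} {x y : V} (hyS : s(x,y) ∈ S) (hne : x ≠ y)
    (h : ¬ (fromEdgeSet (S \ {s(x,y)})).Reachable x y) :
    (fromEdgeSet S).IsBridge s(x,y) := by
  rw [isBridge_iff]
  refine fun hr => h (hr.mono ?_)
  intro c d hcd
  rw [deleteEdges, sdiff_adj] at hcd
  obtain ⟨h1, h2⟩ := hcd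
  rw [fromEdgeSet_adj] at h1
  refine (fromEdgeSet_adj _).mpr ⟨⟨h1.1, ?_⟩, h1.2⟩
  intro hmem
  exact h2 ((fromEdgeSet_adj _).mpr ⟨hmem, h1.2⟩)

lemma acyclic_insert {B : Set (Sym2 V)} (hac : (fromEdgeSet B).IsAcyclic)
    {D : Set (Sym2 V)} (hD : D ⊆ B) {x y : V} (hne : x ≠ y) (hf : s(x,y) ∉ D)
    (h : ¬ (fromEdgeSet D).Reachable x y) :
    (fromEdgeSet (insert s(x,y) D)).IsAcyclic := by
  intro v c hc
  by_cases hmem : s(x,y) ∈ c.edges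
  · have hbr : (fromEdgeSet (insert s(x,y) D)).IsBridge s(x,y) := by
      refine isBridge_of_not_reach (Set.mem_insert _ _) hne ?_
      intro hr
      refine h (hr.mono ?_)
      intro c' d' hcd
      rw [fromEdgeSet_adj] at hcd
      obtain ⟨⟨h1, h2⟩, h3⟩ := hcd
      rcases h1 with h1 | h1
      · exact absurd h1 h2
      · exact (fromEdgeSet_adj _).mpr ⟨h1, h3⟩
    exact hbr.notMem_edges_of_isCycle hc hmem
  · have hsub : ∀ e ∈ c.edges, e ∈ (fromEdgeSet B).edgeSet := by
      intro e he
      have h1 := c.edges_subset_edgeSet he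
      rw [edgeSet_fromEdgeSet] at h1 ⊢
      rcases h1.1 with h2 | h2
      · exact absurd (h2 ▸ he) hmem
      · exact ⟨hD h2, h1.2⟩
    exact hac _ (hc.transfer hsub)

lemma spanning_insert {G : SimpleGraph V} {B : Set (Sym2 V)} (hB : IsSpanningTree G B)
    {a b x y : V} (he : s(a,b) ∈ B) (hf : s(x,y) ∈ G.edgeSet) (hfB : s(x,y) ∉ B) :
    IsSpanningTree G (insert s(x,y) (B \ {s(a,b)})) ↔
      ¬ (fromEdgeSet (B \ {s(a,b)})).Reachable x y := by
  have hxy : x ≠ y := fun h => G.not_isDiag_of_mem_edgeSet hf (h ▸ Sym2.mk_isDiag_iff.mpr rfl)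
  have hab : a ≠ b := ne_of_mem_edges hB.1 he
  have hfD : s(x,y) ∉ B \ {s(a,b)} := fun h => hfB h.1
  constructor
  · intro hsp hr
    have hac := hsp.2.2
    have : ¬ (fromEdgeSet ((insert s(x,y) (B \ {s(a,b)})) \ {s(x,y)})).Reachable x y :=
      acyclic_del hac (Set.mem_insert _ _) hxy
    refine this (hr.mono (fromEdgeSet_mono ?_))
    intro e he'
    exact ⟨Set.mem_insert_of_mem _ he', fun hh => hfD (hh ▸ he')⟩
  · intro hr
    have hpre : (fromEdgeSet B).Preconnected := hB.2.isConnected.preconnected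
    refine ⟨Set.insert_subset hf (fun e he' => hB.1 he'.1), ?_, ?_⟩
    · -- connected
      have hmono : fromEdgeSet (B \ {s(a,b)}) ≤ fromEdgeSet (insert s(x,y) (B \ {s(a,b)})) :=
        fromEdgeSet_mono (fun e he' => Set.mem_insert_of_mem _ he')
      have hcross : ((fromEdgeSet (B \ {s(a,b)})).Reachable a x ∧
          (fromEdgeSet (B \ {s(a,b)})).Reachable b y) ∨
          ((fromEdgeSet (B \ {s(a,b)})).Reachable a y ∧
          (fromEdgeSet (B \ {s(a,b)})).Reachable b x) := by
        rcases reach_or hpre he x with h1 | h1 <;> rcases reach_or hpre he y with h2 | h2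
        · exact absurd (h1.symm.trans h2) hr
        · exact Or.inl ⟨h1, h2⟩
        · exact Or.inr ⟨h2, h1⟩
        · exact absurd (h1.symm.trans h2) hr
      have hadjxy : (fromEdgeSet (insert s(x,y) (B \ {s(a,b)}))).Adj x y :=
        (fromEdgeSet_adj _).mpr ⟨Set.mem_insert _ _, hxy⟩
      have hreachab : (fromEdgeSet (insert s(x,y) (B \ {s(a,b)}))).Reachable a b := by
        rcases hcross with ⟨h1, h2⟩ | ⟨h1, h2⟩
        · exact ((h1.mono hmono).trans hadjxy.reachable).trans (h2.mono hmono).symm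
        · exact ((h1.mono hmono).trans hadjxy.reachable.symm).trans (h2.mono hmono).symm
      rw [connected_iff]
      refine ⟨?_, hB.2.isConnected.nonempty⟩
      intro u w
      have hu := reach_or hpre he u
      have hw := reach_or hpre he w
      have hu' : (fromEdgeSet (insert s(x,y) (B \ {s(a,b)}))).Reachable a u := by
        rcases hu with h | h
        · exact h.mono hmono
        · exact hreachab.trans (h.mono hmono)
      have hw' : (fromEdgeSet (insert s(x,y) (B \ {s(a,b)}))).Reachable a w := by
        rcases hw with h | h
        · exact h.mono hmono
        · exact hreachab.trans (h.mono hmono)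
      exact hu'.symm.trans hw'
    · exact acyclic_insert hB.2.IsAcyclic (fun e he' => he'.1) hxy hfD hr

lemma passive_iff {G : SimpleGraph V} {B : Set (Sym2 V)} (hB : IsSpanningTree G B)
    {a b : V} (he : s(a,b) ∈ B) :
    InternallyPassive G B s(a,b) ↔
      ∃ x y, s(x,y) ∈ G.edgeSet ∧ s(x,y) ∉ B ∧ s(x,y) < s(a,b) ∧
        ¬ (fromEdgeSet (B \ {s(a,b)})).Reachable x y := by
  constructor
  · rintro ⟨-, f, hfE, hfB, hflt, hsp⟩
    induction f using Sym2.ind with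
    | _ x y =>
      exact ⟨x, y, hfE, hfB, hflt, (spanning_insert hB he hfE hfB).mp hsp⟩
  · rintro ⟨x, y, hfE, hfB, hflt, hnr⟩
    exact ⟨he, s(x,y), hfE, hfB, hflt, (spanning_insert hB he hfE hfB).mpr hnr⟩

lemma spanningTree_ncard {G : SimpleGraph V} {T : Set (Sym2 V)} (hT : IsSpanningTree G T) :
    T.ncard + 1 = Fintype.card V := by
  classical
  letI : Fintype ((fromEdgeSet T).edgeSet) := Set.Finite.fintype (Set.toFinite _)
  have h1 := hT.2.card_edgeFinset
  have h2 : (fromEdgeSet T).edgeFinset.card = T.ncard := by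
    rw [SimpleGraph.edgeFinset]
    rw [Set.ncard_eq_toFinset_card' T]
    congr 1
    apply Finset.ext
    intro e
    simp only [Set.mem_toFinset]
    rw [edgeSet_fromEdgeSet_eq hT.1]
  rw [h2] at h1
  exact h1

end St10
namespace St10
set_option linter.unusedSectionVars false
set_option linter.unusedVariables false
open SimpleGraph

variable {V : Type} [Fintype V] [LinearOrder V] [LinearOrder (Sym2 V)]

/-- parent of a vertex in the minimum spanning tree -/
noncomputable def par (G : SimpleGraph V) (v0 v1 v2 : V) (x : V) : V :=
  if G.Adj v0 x then v0 else if G.Adj v1 x then v1 else v2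

/-- the explicit minimum spanning tree -/
def Tset (G : SimpleGraph V) (v0 v1 v2 : V) : Set (Sym2 V) :=
  {e | ∃ x, x ≠ v0 ∧ e = s(par G v0 v1 v2 x, x)}

section TreeStructure

variable {G : SimpleGraph V} {v0 v1 v2 : V}

lemma par_cases (x : V) : par G v0 v1 v2 x = v0 ∨ par G v0 v1 v2 x = v1 ∨
    par G v0 v1 v2 x = v2 := by
  unfold par; split_ifs <;> simp

variable (hG : IsTriconed G v0 v1 v2)
include hG

lemma padj {x : V} (hx : x ≠ v0) : G.Adj (par G v0 v1 v2 x) x := by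
  obtain ⟨hconn, h01, h02, h12, ha1, ha2, hcov⟩ := hG
  unfold par
  split_ifs with h1 h2
  · exact h1
  · exact h2
  · have hx1 : x ≠ v1 := fun h => h1 (h ▸ ha1)
    have hx2 : x ≠ v2 := fun h => h1 (h ▸ ha2)
    rcases hcov x hx hx1 hx2 with h | h | h
    · exact absurd h h1
    · exact absurd h h2
    · exact h

lemma par_ne {x : V} (hx : x ≠ v0) : par G v0 v1 v2 x ≠ x := (padj hG hx).ne

lemma par_v1 : par G v0 v1 v2 v1 = v0 := by
  unfold par; rw [if_pos hG.2.2.2.2.1]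

lemma par_v2 : par G v0 v1 v2 v2 = v0 := by
  unfold par; rw [if_pos hG.2.2.2.2.2.1]

lemma par_eq_v0 {x : V} (h : par G v0 v1 v2 x = v0) : G.Adj v0 x := by
  obtain ⟨hconn, h01, h02, h12, ha1, ha2, hcov⟩ := hG
  by_contra hna
  unfold par at h
  rw [if_neg hna] at h
  split_ifs at h with h2
  · exact h01 h.symm
  · exact h02 h.symm

lemma par_eq_v1 {x : V} (h : par G v0 v1 v2 x = v1) : ¬G.Adj v0 x ∧ G.Adj v1 x := by
  obtain ⟨hconn, h01, h02, h12, ha1, ha2, hcov⟩ := hG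
  unfold par at h
  split_ifs at h with ha hb
  · exact absurd h h01
  · exact ⟨ha, hb⟩
  · exact absurd h.symm h12

lemma par_eq_v2 {x : V} (h : par G v0 v1 v2 x = v2) : ¬G.Adj v0 x ∧ ¬G.Adj v1 x := by
  obtain ⟨hconn, h01, h02, h12, ha1, ha2, hcov⟩ := hG
  unfold par at h
  split_ifs at h with ha hb
  · exact absurd h h02
  · exact absurd h h12
  · exact ⟨ha, hb⟩

/-- vertices ≠ v0 adjacent (in G) to v0 are exactly those with parent v0, etc. -/
lemma par_inj {x y : V} (hx : x ≠ v0) (hy : y ≠ v0)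
    (h : s(par G v0 v1 v2 x, x) = s(par G v0 v1 v2 y, y)) : x = y := by
  rcases Sym2.eq_iff.mp h with ⟨h1, h2⟩ | ⟨h1, h2⟩
  · exact h2
  · -- par x = y and x = par y
    exfalso
    rcases par_cases (G := G) (v0 := v0) (v1 := v1) (v2 := v2) y with hp | hp | hp
    · exact hx (h2 ▸ hp)
    · have : x = v1 := h2 ▸ hp
      subst this
      rw [par_v1 hG] at h1
      exact hy h1.symm
    · have : x = v2 := h2 ▸ hp
      subst this
      rw [par_v2 hG] at h1
      exact hy h1.symm

lemma Tset_subset : Tset G v0 v1 v2 ⊆ G.edgeSet := by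
  rintro e ⟨x, hx, rfl⟩
  exact (padj hG hx : G.Adj _ x)

lemma mem_Tset_elim {e : Sym2 V} (he : e ∈ Tset G v0 v1 v2) :
    ∃ x, x ≠ v0 ∧ e = s(par G v0 v1 v2 x, x) := he

/-- invariant: the component of x after deleting its cone edge -/
lemma Tset_inv {x : V} (hx : x ≠ v0) {z : V}
    (h : (fromEdgeSet (Tset G v0 v1 v2 \ {s(par G v0 v1 v2 x, x)})).Reachable x z) :
    z = x ∨ (par G v0 v1 v2 z = x ∧ z ≠ v0) := by
  refine reach_ind (fun z => z = x ∨ (par G v0 v1 v2 z = x ∧ z ≠ v0)) ?_ h (Or.inl rfl)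
  rintro a b ⟨hab, hne⟩ hab' hPa
  obtain ⟨y, hy, hey⟩ := hab
  rcases Sym2.eq_iff.mp hey with ⟨h1, h2⟩ | ⟨h1, h2⟩
  · -- a = par y, b = y
    subst h2
    rcases hPa with rfl | ⟨hpa, hav0⟩
    · exact Or.inr ⟨h1.symm, hy⟩
    · exfalso
      rcases par_cases (G := G) (v0 := v0) (v1 := v1) (v2 := v2) b with hp | hp | hp
      · exact hav0 (h1 ▸ hp)
      · have : a = v1 := h1 ▸ hp
        subst this
        rw [par_v1 hG] at hpa
        exact hx hpa.symm
      · have : a = v2 := h1 ▸ hp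
        subst this
        rw [par_v2 hG] at hpa
        exact hx hpa.symm
  · -- a = y, b = par y
    subst h1
    rcases hPa with rfl | ⟨hpa, hav0⟩
    · exact absurd (Set.mem_singleton_iff.mpr hey) hne
    · exact Or.inl (h2.trans hpa)

lemma Tset_not_reach_root {x : V} (hx : x ≠ v0) :
    ¬ (fromEdgeSet (Tset G v0 v1 v2 \ {s(par G v0 v1 v2 x, x)})).Reachable x v0 := by
  intro h
  rcases Tset_inv hG hx h with h1 | ⟨h1, h2⟩
  · exact hx h1.symm
  · exact h2 rfl

lemma Tset_not_reach_par {x : V} (hx : x ≠ v0) :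
    ¬ (fromEdgeSet (Tset G v0 v1 v2 \ {s(par G v0 v1 v2 x, x)})).Reachable x
      (par G v0 v1 v2 x) := by
  intro h
  rcases Tset_inv hG hx h with h1 | ⟨h1, h2⟩
  · exact par_ne hG hx h1
  · rcases par_cases (G := G) (v0 := v0) (v1 := v1) (v2 := v2) x with hp | hp | hp
    · exact h2 hp
    · rw [hp, par_v1 hG] at h1; exact hx h1.symm
    · rw [hp, par_v2 hG] at h1; exact hx h1.symm

lemma Tset_acyclic : (fromEdgeSet (Tset G v0 v1 v2)).IsAcyclic := by
  rw [isAcyclic_iff_forall_adj_isBridge]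
  intro a b hadj
  obtain ⟨hab, hne⟩ := (fromEdgeSet_adj _).mp hadj
  obtain ⟨y, hy, hey⟩ := hab
  rw [hey]
  refine isBridge_of_not_reach ?_ (par_ne hG hy) ?_
  · exact ⟨y, hy, rfl⟩
  · intro h
    exact Tset_not_reach_par hG hy h.symm

lemma Tset_reach_root (z : V) : (fromEdgeSet (Tset G v0 v1 v2)).Reachable z v0 := by
  by_cases hz : z = v0
  · exact hz ▸ Reachable.refl _
  · have hadj : (fromEdgeSet (Tset G v0 v1 v2)).Adj (par G v0 v1 v2 z) z :=
      (fromEdgeSet_adj _).mpr ⟨⟨z, hz, rfl⟩, par_ne hG hz⟩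
    rcases par_cases (G := G) (v0 := v0) (v1 := v1) (v2 := v2) z with hp | hp | hp
    · exact (hp ▸ hadj).reachable.symm
    · have h1 : v1 ≠ v0 := hG.2.1.symm
      have hadj2 : (fromEdgeSet (Tset G v0 v1 v2)).Adj (par G v0 v1 v2 v1) v1 :=
        (fromEdgeSet_adj _).mpr ⟨⟨v1, h1, rfl⟩, par_ne hG h1⟩
      rw [par_v1 hG] at hadj2
      exact (hp ▸ hadj).reachable.symm.trans hadj2.symm.reachable
    · have h1 : v2 ≠ v0 := hG.2.2.1.symm
      have hadj2 : (fromEdgeSet (Tset G v0 v1 v2)).Adj (par G v0 v1 v2 v2) v2 :=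
        (fromEdgeSet_adj _).mpr ⟨⟨v2, h1, rfl⟩, par_ne hG h1⟩
      rw [par_v2 hG] at hadj2
      exact (hp ▸ hadj).reachable.symm.trans hadj2.symm.reachable

lemma Tset_spanning : IsSpanningTree G (Tset G v0 v1 v2) := by
  refine ⟨Tset_subset hG, ?_, Tset_acyclic hG⟩
  rw [connected_iff]
  refine ⟨fun u w => (Tset_reach_root hG u).trans (Tset_reach_root hG w).symm,
    hG.1.nonempty⟩

end TreeStructure
end St10
namespace St10
set_option linter.unusedSectionVars false
set_option linter.unusedVariables false
open SimpleGraph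

variable {V : Type} [Fintype V] [LinearOrder V] [LinearOrder (Sym2 V)]

section Blocks
variable {G : SimpleGraph V} {v0 v1 v2 : V} (hG : IsTriconed G v0 v1 v2)
include hG

lemma block_cone0 {x : V} (hx : x ≠ v0) (hp : par G v0 v1 v2 x = v0) :
    edgeBlock G v0 v1 v2 s(par G v0 v1 v2 x, x) = 0 := by
  unfold edgeBlock
  rw [if_pos]
  rw [hp]
  exact Sym2.mem_mk_left _ _

lemma block_cone1 {x : V} (hx : x ≠ v0) (hp : par G v0 v1 v2 x = v1) :
    edgeBlock G v0 v1 v2 s(par G v0 v1 v2 x, x) = 1 := by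
  have hnadj := par_eq_v1 hG hp
  unfold edgeBlock
  rw [hp, if_neg, if_pos ⟨x, rfl, hnadj.1⟩]
  rw [Sym2.mem_iff]
  rintro (h | h)
  · exact hG.2.1 h
  · exact hx h.symm

lemma block_cone2 {x : V} (hx : x ≠ v0) (hp : par G v0 v1 v2 x = v2) :
    edgeBlock G v0 v1 v2 s(par G v0 v1 v2 x, x) = 2 := by
  have hnadj := par_eq_v2 hG hp
  have hc0 : v0 ∉ (s(v2, x) : Sym2 V) := by
    rw [Sym2.mem_iff]
    rintro (h | h)
    · exact hG.2.2.1 h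
    · exact hx h.symm
  have hc1 : ¬∃ x', (s(v2, x) : Sym2 V) = s(v1, x') ∧ ¬G.Adj v0 x' := by
    rintro ⟨x', heq, hx'⟩
    rcases Sym2.eq_iff.mp heq with ⟨h1, h2⟩ | ⟨h1, h2⟩
    · exact hG.2.2.2.1 h1.symm
    · rw [h2] at hnadj
      exact hnadj.1 hG.2.2.2.2.1
  unfold edgeBlock
  rw [hp, if_neg hc0, if_neg hc1, if_pos ⟨x, rfl, hnadj.1, hnadj.2⟩]

lemma block_cone_le2 {x : V} (hx : x ≠ v0) :
    edgeBlock G v0 v1 v2 s(par G v0 v1 v2 x, x) ≤ 2 := by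
  rcases par_cases (G := G) (v0 := v0) (v1 := v1) (v2 := v2) x with hp | hp | hp
  · rw [block_cone0 hG hx hp]; omega
  · rw [block_cone1 hG hx hp]; omega
  · rw [block_cone2 hG hx hp]

lemma block_le2_of_Tset {e : Sym2 V} (he : e ∈ Tset G v0 v1 v2) :
    edgeBlock G v0 v1 v2 e ≤ 2 := by
  obtain ⟨x, hx, rfl⟩ := he
  exact block_cone_le2 hG hx

lemma block_three {e : Sym2 V} (he : e ∈ G.edgeSet) (hn : e ∉ Tset G v0 v1 v2) :
    edgeBlock G v0 v1 v2 e = 3 := by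
  by_cases h0 : v0 ∈ e
  · exfalso
    obtain ⟨z, rfl⟩ := Sym2.mem_iff_exists.mp h0
    have hadj : G.Adj v0 z := (G.mem_edgeSet).mp he
    have hz : z ≠ v0 := fun h => G.loopless.irrefl v0 (h ▸ hadj)
    refine hn ⟨z, hz, ?_⟩
    have : par G v0 v1 v2 z = v0 := by unfold par; rw [if_pos hadj]
    rw [this]
  · by_cases h1 : ∃ x, e = s(v1, x) ∧ ¬G.Adj v0 x
    · exfalso
      obtain ⟨x', rfl, hna⟩ := h1
      have hadj : G.Adj v1 x' := (G.mem_edgeSet).mp he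
      have hx' : x' ≠ v0 := by
        rintro rfl
        exact h0 (Sym2.mem_mk_right _ _)
      refine hn ⟨x', hx', ?_⟩
      have : par G v0 v1 v2 x' = v1 := by unfold par; rw [if_neg hna, if_pos hadj]
      rw [this]
    · by_cases h2 : ∃ x, e = s(v2, x) ∧ ¬G.Adj v0 x ∧ ¬G.Adj v1 x
      · exfalso
        obtain ⟨x', rfl, hna, hnb⟩ := h2
        have hadj : G.Adj v2 x' := (G.mem_edgeSet).mp he
        have hx' : x' ≠ v0 := by
          rintro rfl
          exact h0 (Sym2.mem_mk_right _ _)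
        refine hn ⟨x', hx', ?_⟩
        have : par G v0 v1 v2 x' = v2 := by unfold par; rw [if_neg hna, if_neg hnb]
        rw [this]
      · unfold edgeBlock
        rw [if_neg h0, if_neg h1, if_neg h2]

lemma B0_eq {B0 : Set (Sym2 V)} (heo : EdgeOrderSpec G v0 v1 v2)
    (hB0 : IsMinSpanningTree G B0) : B0 = Tset G v0 v1 v2 := by
  by_contra hne
  have hTsp : IsSpanningTree G (Tset G v0 v1 v2) := Tset_spanning hG
  obtain ⟨g, hgB0, hgT, hmin⟩ := hB0.2 _ hTsp (fun h => hne h.symm)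
  have hTnB0 : ∃ h', h' ∈ Tset G v0 v1 v2 ∧ h' ∉ B0 := by
    by_contra hc
    push_neg at hc
    have hsub : Tset G v0 v1 v2 ⊆ B0 := fun e he => hc e he
    have hc1 := spanningTree_ncard hTsp
    have hc2 := spanningTree_ncard hB0.1
    have : Tset G v0 v1 v2 = B0 :=
      Set.eq_of_subset_of_ncard_le hsub (by omega) (Set.toFinite _)
    exact hgT (this ▸ hgB0)
  obtain ⟨h', hh'T, hh'B0⟩ := hTnB0
  have hblt : h' < g := by
    refine heo.1 h' (Tset_subset hG hh'T) g (hB0.1.1 hgB0) ?_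
    rw [block_three hG (hB0.1.1 hgB0) hgT]
    have := block_le2_of_Tset hG hh'T
    omega
  have hglt : g < h' := hmin h' (Or.inr ⟨hh'T, hh'B0⟩) (fun h => hh'B0 (h ▸ hgB0))
  exact lt_asymm hblt hglt

end Blocks
end St10
namespace St10
set_option linter.unusedSectionVars false
set_option linter.unusedVariables false
open SimpleGraph

variable {V : Type} [Fintype V] [LinearOrder V] [LinearOrder (Sym2 V)]

lemma sym2Min_mk (a b : V) : sym2Min s(a,b) = min a b := rfl
lemma sym2Max_mk (a b : V) : sym2Max s(a,b) = max a b := rfl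

lemma lex_same {a u x : V} (hu : a < u) (hx : a < x) (hux : u < x) :
    Sym2Lex s(a,u) s(a,x) := by
  right
  rw [sym2Min_mk, sym2Min_mk, sym2Max_mk, sym2Max_mk,
    min_eq_left hu.le, min_eq_left hx.le, max_eq_right hu.le, max_eq_right hx.le]
  exact ⟨rfl, hux⟩

section Order

variable {G : SimpleGraph V} {v0 v1 v2 : V} (hG : IsTriconed G v0 v1 v2)
  (hvo : VertexOrderSpec G v0 v1 v2) (heo : EdgeOrderSpec G v0 v1 v2)
include hG hvo

lemma v0_min {z : V} (hz : z ≠ v0) : v0 < z := by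
  by_cases h1 : z = v1
  · exact h1 ▸ hvo.1
  by_cases h2 : z = v2
  · exact h2 ▸ (hvo.1.trans hvo.2.1)
  · exact hvo.1.trans (hvo.2.1.trans (hvo.2.2.1 z hz h1 h2))

lemma v2_lt_normal {z : V} (h0 : z ≠ v0) (h1 : z ≠ v1) (h2 : z ≠ v2) : v2 < z :=
  hvo.2.2.1 z h0 h1 h2

lemma v1_lt_normal {z : V} (h0 : z ≠ v0) (h1 : z ≠ v1) (h2 : z ≠ v2) : v1 < z :=
  hvo.2.1.trans (v2_lt_normal hG hvo h0 h1 h2)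

lemma block_v0_mem {e : Sym2 V} (h : v0 ∈ e) : edgeBlock G v0 v1 v2 e = 0 := by
  unfold edgeBlock; rw [if_pos h]

include heo

lemma cone_lt_cone {u x : V} (hu : u ≠ v0) (hx0 : x ≠ v0) (hx1 : x ≠ v1) (hx2 : x ≠ v2)
    (hlt : u < x) :
    s(par G v0 v1 v2 u, u) < s(par G v0 v1 v2 x, x) := by
  have heu : s(par G v0 v1 v2 u, u) ∈ G.edgeSet := padj hG hu
  have hex : s(par G v0 v1 v2 x, x) ∈ G.edgeSet := padj hG hx0
  rcases par_cases (G := G) (v0 := v0) (v1 := v1) (v2 := v2) u with hpu | hpu | hpu <;>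
    rcases par_cases (G := G) (v0 := v0) (v1 := v1) (v2 := v2) x with hpx | hpx | hpx
  · -- 0,0
    refine heo.2 _ heu _ hex ?_ ?_ ?_
    · rw [block_cone0 hG hu hpu, block_cone0 hG hx0 hpx]
    · rw [block_cone0 hG hu hpu]; omega
    · rw [hpu, hpx]
      exact lex_same (v0_min hG hvo hu) (v0_min hG hvo hx0) hlt
  · exact heo.1 _ heu _ hex (by rw [block_cone0 hG hu hpu, block_cone1 hG hx0 hpx]; omega)
  · exact heo.1 _ heu _ hex (by rw [block_cone0 hG hu hpu, block_cone2 hG hx0 hpx]; omega)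
  · -- 1,0 : impossible
    exfalso
    have hfu := par_eq_v1 hG hpu
    have hu1 : u ≠ v1 := fun h => hfu.1 (h ▸ hG.2.2.2.2.1)
    have hu2 : u ≠ v2 := fun h => hfu.1 (h ▸ hG.2.2.2.2.2.1)
    exact lt_asymm hlt
      (hvo.2.2.2.1 x u hx0 hx1 hx2 hu hu1 hu2 (par_eq_v0 hG hpx) hfu.1)
  · -- 1,1
    have hfu := par_eq_v1 hG hpu
    have hfx := par_eq_v1 hG hpx
    have hu1 : u ≠ v1 := fun h => hfu.1 (h ▸ hG.2.2.2.2.1)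
    have hu2 : u ≠ v2 := fun h => hfu.1 (h ▸ hG.2.2.2.2.2.1)
    refine heo.2 _ heu _ hex ?_ ?_ ?_
    · rw [block_cone1 hG hu hpu, block_cone1 hG hx0 hpx]
    · rw [block_cone1 hG hu hpu]; omega
    · rw [hpu, hpx]
      exact lex_same (v1_lt_normal hG hvo hu hu1 hu2) (v1_lt_normal hG hvo hx0 hx1 hx2) hlt
  · exact heo.1 _ heu _ hex (by rw [block_cone1 hG hu hpu, block_cone2 hG hx0 hpx]; omega)
  · -- 2,0 : impossible
    exfalso
    have hfu := par_eq_v2 hG hpu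
    have hu1 : u ≠ v1 := fun h => hfu.1 (h ▸ hG.2.2.2.2.1)
    have hu2 : u ≠ v2 := fun h => hfu.1 (h ▸ hG.2.2.2.2.2.1)
    exact lt_asymm hlt
      (hvo.2.2.2.1 x u hx0 hx1 hx2 hu hu1 hu2 (par_eq_v0 hG hpx) hfu.1)
  · -- 2,1 : impossible
    exfalso
    have hfu := par_eq_v2 hG hpu
    have hfx := par_eq_v1 hG hpx
    have hu1 : u ≠ v1 := fun h => hfu.1 (h ▸ hG.2.2.2.2.1)
    have hu2 : u ≠ v2 := fun h => hfu.1 (h ▸ hG.2.2.2.2.2.1)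
    exact lt_asymm hlt
      (hvo.2.2.2.2 x u hx0 hx1 hx2 hu hu1 hu2 hfx.1 hfu.1 hfx.2 hfu.2)
  · -- 2,2
    have hfu := par_eq_v2 hG hpu
    have hfx := par_eq_v2 hG hpx
    have hu1 : u ≠ v1 := fun h => hfu.1 (h ▸ hG.2.2.2.2.1)
    have hu2 : u ≠ v2 := fun h => hfu.1 (h ▸ hG.2.2.2.2.2.1)
    refine heo.2 _ heu _ hex ?_ ?_ ?_
    · rw [block_cone2 hG hu hpu, block_cone2 hG hx0 hpx]
    · rw [block_cone2 hG hu hpu]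
    · rw [hpu, hpx]
      exact lex_same (v2_lt_normal hG hvo hu hu1 hu2) (v2_lt_normal hG hvo hx0 hx1 hx2) hlt

/-- any edge smaller than a cone edge of a normal vertex is a smaller cone edge -/
lemma lt_cone_elim {x : V} {f : Sym2 V} (hf : f ∈ G.edgeSet)
    (hx0 : x ≠ v0) (hx1 : x ≠ v1) (hx2 : x ≠ v2)
    (hlt : f < s(par G v0 v1 v2 x, x)) :
    ∃ z, z ≠ v0 ∧ f = s(par G v0 v1 v2 z, z) ∧ z < x := by
  have hex : s(par G v0 v1 v2 x, x) ∈ G.edgeSet := padj hG hx0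
  by_cases hfT : f ∈ Tset G v0 v1 v2
  · obtain ⟨z, hz, rfl⟩ := hfT
    refine ⟨z, hz, rfl, ?_⟩
    by_contra hzx
    push_neg at hzx
    rcases eq_or_lt_of_le hzx with h | h
    · subst h
      exact lt_irrefl _ hlt
    · have hz1 : z ≠ v1 := by
        rintro rfl
        exact lt_asymm h (v1_lt_normal hG hvo hx0 hx1 hx2)
      have hz2 : z ≠ v2 := by
        rintro rfl
        exact lt_asymm h (v2_lt_normal hG hvo hx0 hx1 hx2)
      exact lt_asymm hlt (cone_lt_cone hG hvo heo hx0 hz hz1 hz2 h)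
  · exfalso
    have h3 := block_three hG hf hfT
    refine lt_asymm hlt (heo.1 _ hex _ hf ?_)
    rw [h3]
    have := block_cone_le2 hG (x := x) hx0
    omega

lemma lt_01 {f : Sym2 V} (hf : f ∈ G.edgeSet) (hne : f ≠ s(v0,v1)) : s(v0,v1) < f := by
  have he01 : (s(v0,v1) : Sym2 V) ∈ G.edgeSet := hG.2.2.2.2.1
  by_cases hfT : f ∈ Tset G v0 v1 v2
  · obtain ⟨z, hz, rfl⟩ := hfT
    have hz1 : z ≠ v1 := by
      rintro rfl
      exact hne (by rw [par_v1 hG])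
    by_cases hz2 : z = v2
    · subst hz2
      rw [par_v2 hG]
      refine heo.2 _ he01 _ hG.2.2.2.2.2.1 ?_ ?_ ?_
      · rw [block_v0_mem hG hvo (Sym2.mem_mk_left _ _), block_v0_mem hG hvo (Sym2.mem_mk_left _ _)]
      · rw [block_v0_mem hG hvo (Sym2.mem_mk_left _ _)]; omega
      · exact lex_same hvo.1 (hvo.1.trans hvo.2.1) hvo.2.1
    · have : (s(v0,v1) : Sym2 V) = s(par G v0 v1 v2 v1, v1) := by rw [par_v1 hG]
      rw [this]
      exact cone_lt_cone hG hvo heo hG.2.1.symm hz hz1 hz2 (v1_lt_normal hG hvo hz hz1 hz2)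
  · refine heo.1 _ he01 _ hf ?_
    rw [block_three hG hf hfT, block_v0_mem hG hvo (Sym2.mem_mk_left _ _)]
    omega

lemma lt_02 {f : Sym2 V} (hf : f ∈ G.edgeSet) (hne1 : f ≠ s(v0,v1)) (hne2 : f ≠ s(v0,v2)) :
    s(v0,v2) < f := by
  have he02 : (s(v0,v2) : Sym2 V) ∈ G.edgeSet := hG.2.2.2.2.2.1
  by_cases hfT : f ∈ Tset G v0 v1 v2
  · obtain ⟨z, hz, rfl⟩ := hfT
    have hz1 : z ≠ v1 := by
      rintro rfl
      exact hne1 (by rw [par_v1 hG])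
    have hz2 : z ≠ v2 := by
      rintro rfl
      exact hne2 (by rw [par_v2 hG])
    have : (s(v0,v2) : Sym2 V) = s(par G v0 v1 v2 v2, v2) := by rw [par_v2 hG]
    rw [this]
    exact cone_lt_cone hG hvo heo hG.2.2.1.symm hz hz1 hz2 (v2_lt_normal hG hvo hz hz1 hz2)
  · refine heo.1 _ he02 _ hf ?_
    rw [block_three hG hf hfT, block_v0_mem hG hvo (Sym2.mem_mk_left _ _)]
    omega

end Order
end St10
namespace St10
set_option linter.unusedSectionVars false
set_option linter.unusedVariables false
open SimpleGraph

variable {V : Type} [Fintype V] [LinearOrder V] [LinearOrder (Sym2 V)]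

section Child
variable {G : SimpleGraph V} {v0 v1 v2 : V} (hG : IsTriconed G v0 v1 v2)
include hG

lemma cone_mem_Tset {u : V} (hu : u ≠ v0) : s(u, par G v0 v1 v2 u) ∈ Tset G v0 v1 v2 :=
  ⟨u, hu, (Sym2.eq_swap ..).symm⟩

lemma child_par {u : V} (hu : u ≠ v0) : IsChildOf (Tset G v0 v1 v2) v0 u (par G v0 v1 v2 u) := by
  refine ⟨cone_mem_Tset hG hu, ?_⟩
  have hswap : (s(u, par G v0 v1 v2 u) : Sym2 V) = s(par G v0 v1 v2 u, u) := Sym2.eq_swap ..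
  rw [hswap]
  exact Tset_not_reach_root hG hu

lemma child_elim {u p : V} (h : IsChildOf (Tset G v0 v1 v2) v0 u p) :
    u ≠ v0 ∧ p = par G v0 v1 v2 u := by
  obtain ⟨hmem, hnr⟩ := h
  obtain ⟨y, hy, heq⟩ := hmem
  rcases Sym2.eq_iff.mp heq with ⟨h1, h2⟩ | ⟨h1, h2⟩
  · -- u = par y, p = y : impossible
    exfalso
    subst h2
    rcases par_cases (G := G) (v0 := v0) (v1 := v1) (v2 := v2) p with hp | hp | hp
    · refine hnr ?_
      rw [show u = v0 from h1.trans hp]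
    · -- u = v1
      have hu1 : u = v1 := h1.trans hp
      have hpar : par G v0 v1 v2 u = v0 := by rw [hu1]; exact par_v1 hG
      have hadj : (fromEdgeSet (Tset G v0 v1 v2 \ {s(u, p)})).Adj u v0 := by
        refine (fromEdgeSet_adj _).mpr ⟨⟨⟨u, ?_, ?_⟩, ?_⟩, ?_⟩
        · rw [hu1]; exact hG.2.1.symm
        · rw [hpar]; exact Sym2.eq_swap ..
        · rw [Set.mem_singleton_iff]
          intro hcon
          rcases Sym2.eq_iff.mp hcon with ⟨ha, hb⟩ | ⟨ha, hb⟩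
          · exact hy hb.symm
          · exact hG.2.1 (hu1 ▸ hb : v0 = v1)
        · rw [hu1]; exact hG.2.1.symm
      exact hnr hadj.reachable
    · -- u = v2
      have hu1 : u = v2 := h1.trans hp
      have hpar : par G v0 v1 v2 u = v0 := by rw [hu1]; exact par_v2 hG
      have hadj : (fromEdgeSet (Tset G v0 v1 v2 \ {s(u, p)})).Adj u v0 := by
        refine (fromEdgeSet_adj _).mpr ⟨⟨⟨u, ?_, ?_⟩, ?_⟩, ?_⟩
        · rw [hu1]; exact hG.2.2.1.symm
        · rw [hpar]; exact Sym2.eq_swap ..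
        · rw [Set.mem_singleton_iff]
          intro hcon
          rcases Sym2.eq_iff.mp hcon with ⟨ha, hb⟩ | ⟨ha, hb⟩
          · exact hy hb.symm
          · exact hG.2.2.1 (hu1 ▸ hb : v0 = v2)
        · rw [hu1]; exact hG.2.2.1.symm
      exact hnr hadj.reachable
  · have huy : u = y := h1
    subst huy
    exact ⟨hy, h2⟩

lemma Tset_shape {c d : V} (h : s(c,d) ∈ Tset G v0 v1 v2) :
    (c ≠ v0 ∧ d = par G v0 v1 v2 c) ∨ (d ≠ v0 ∧ c = par G v0 v1 v2 d) := by
  obtain ⟨y, hy, heq⟩ := h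
  rcases Sym2.eq_iff.mp heq with ⟨h1, h2⟩ | ⟨h1, h2⟩
  · exact Or.inr ⟨h2 ▸ hy, h2 ▸ h1⟩
  · exact Or.inl ⟨h1 ▸ hy, h1 ▸ h2⟩

lemma mem_Tset_of_v0_mem {e : Sym2 V} (he : e ∈ G.edgeSet) (h0 : v0 ∈ e) :
    e ∈ Tset G v0 v1 v2 := by
  obtain ⟨z, rfl⟩ := Sym2.mem_iff_exists.mp h0
  have hadj : G.Adj v0 z := (G.mem_edgeSet).mp he
  have hz : z ≠ v0 := fun h => G.loopless.irrefl v0 (h ▸ hadj)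
  refine ⟨z, hz, ?_⟩
  have : par G v0 v1 v2 z = v0 := by unfold par; rw [if_pos hadj]
  rw [this]

end Child

section Marks

variable {G : SimpleGraph V} {v0 v1 v2 : V} {B E : Set (Sym2 V)} {m : V → ℕ}
  (hG : IsTriconed G v0 v1 v2) (hB : IsSpanningTree G B)
  (hphi : IsPhi1 G v0 v1 v2 (Tset G v0 v1 v2) B E m)
include hG hphi

lemma mark_pos_iff (v : V) :
    1 ≤ m v ↔ (v = v1 ∨ v = v2 ∨ (v ≠ v0 ∧ s(v, par G v0 v1 v2 v) ∈ B)) := by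
  rw [hphi.2.2.1 v]
  constructor
  · rintro (h | h | ⟨p, hch, hmem⟩)
    · exact Or.inl h
    · exact Or.inr (Or.inl h)
    · obtain ⟨h1, h2⟩ := child_elim hG hch
      exact Or.inr (Or.inr ⟨h1, h2 ▸ hmem⟩)
  · rintro (h | h | ⟨h1, h2⟩)
    · exact Or.inl h
    · exact Or.inr (Or.inl h)
    · exact Or.inr (Or.inr ⟨_, child_par hG h1, h2⟩)

lemma E_sub : E ⊆ B \ Tset G v0 v1 v2 := by
  intro e he
  rw [hphi.1] at he
  exact ⟨he.1, he.2.2.1⟩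

lemma E_v0_not_mem {e : Sym2 V} (he : e ∈ E) : v0 ∉ e := by
  rw [hphi.1] at he
  exact he.2.2.2

lemma mem_E_of_B_not_T (hsub : B ⊆ G.edgeSet) {e : Sym2 V} (he : e ∈ B)
    (hnT : e ∉ Tset G v0 v1 v2) : e ∈ E := by
  rw [hphi.1]
  refine ⟨he, hsub he, hnT, ?_⟩
  intro h0
  exact hnT (mem_Tset_of_v0_mem hG (hsub he) h0)

lemma reach_E_ne_v0 {x z : V} (hx : x ≠ v0)
    (h : (fromEdgeSet E).Reachable x z) : z ≠ v0 := by
  refine reach_ind (fun t => t ≠ v0) ?_ h hx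
  intro a b hab hne ha
  intro hb
  exact E_v0_not_mem hG hphi hab (hb ▸ Sym2.mem_mk_right a b)

end Marks

section CompMarks
variable {E : Set (Sym2 V)} {m : V → ℕ}

lemma compMarks_ge_one {x : V} (hx : 1 ≤ m x) : 1 ≤ compMarks E m x := by
  unfold compMarks
  have h2 : (if (fromEdgeSet E).Reachable x x then m x else 0) ≤
      ∑ z : V, (if (fromEdgeSet E).Reachable x z then m z else 0) :=
    Finset.single_le_sum (f := fun z => if (fromEdgeSet E).Reachable x z then m z else 0)
      (fun i _ => Nat.zero_le _) (Finset.mem_univ x)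
  rw [if_pos (Reachable.refl x)] at h2
  exact hx.trans h2

lemma compMarks_ge_two {x c : V} (hx : 1 ≤ m x) (hc : 1 ≤ m c)
    (hr : (fromEdgeSet E).Reachable x c) (hne : c ≠ x) : 2 ≤ compMarks E m x := by
  unfold compMarks
  have h2 : ∑ z ∈ ({x, c} : Finset V), (if (fromEdgeSet E).Reachable x z then m z else 0) ≤
      ∑ z : V, (if (fromEdgeSet E).Reachable x z then m z else 0) :=
    Finset.sum_le_sum_of_subset (f := fun z => if (fromEdgeSet E).Reachable x z then m z else 0)
      (Finset.subset_univ _)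
  rw [Finset.sum_pair (Ne.symm hne), if_pos (Reachable.refl x), if_pos hr] at h2
  exact le_trans (by omega) h2

lemma compMarks_cases {x : V} (h : 2 ≤ compMarks E m x) :
    2 ≤ m x ∨ ∃ c, c ≠ x ∧ (fromEdgeSet E).Reachable x c ∧ 1 ≤ m c := by
  by_contra hc
  push_neg at hc
  obtain ⟨h1, h2⟩ := hc
  have h3 : compMarks E m x = (if (fromEdgeSet E).Reachable x x then m x else 0) := by
    unfold compMarks
    refine Finset.sum_eq_single x ?_ ?_
    · intro b _ hb
      by_cases hr : (fromEdgeSet E).Reachable x b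
      · rw [if_pos hr]
        have := h2 b hb hr
        omega
      · exact if_neg hr
    · intro hx
      exact absurd (Finset.mem_univ x) hx
  rw [if_pos (Reachable.refl x)] at h3
  omega

end CompMarks
end St10
namespace St10
set_option linter.unusedSectionVars false
set_option linter.unusedVariables false
open SimpleGraph

variable {V : Type} [Fintype V] [LinearOrder V] [LinearOrder (Sym2 V)]

section DMA
variable {G : SimpleGraph V} {v0 v1 v2 : V} {B : Set (Sym2 V)}
  (hG : IsTriconed G v0 v1 v2) (hB : IsSpanningTree G B)
include hG hB

lemma exists_DMA (h02B : s(v0,v2) ∈ B)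
    (hr : (fromEdgeSet (B \ {s(v0,v2)})).Reachable v2 v1) :
    ∃ v, DoublyMarkedAt (Tset G v0 v1 v2) B v0 v1 v2 v := by
  classical
  obtain ⟨w0⟩ := hr
  set p0 : (fromEdgeSet (B \ {s(v0,v2)})).Walk v2 v1 := ↑w0.toPath with hp0
  have hsub : ∀ e ∈ p0.edges, e ∈ (fromEdgeSet B).edgeSet := by
    intro e he
    have := p0.edges_subset_edgeSet he
    rw [edgeSet_fromEdgeSet] at this ⊢
    exact ⟨this.1.1, this.2⟩
  set p : (fromEdgeSet B).Walk v2 v1 := p0.transfer _ hsub with hp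
  have hpath : p.IsPath := (w0.toPath.2).transfer hsub
  have hedges : p.edges = p0.edges := p0.edges_transfer hsub
  have h02e : s(v0,v2) ∉ p.edges := by
    rw [hedges]
    intro hmem
    have := p0.edges_subset_edgeSet hmem
    rw [edgeSet_fromEdgeSet] at this
    exact this.1.2 rfl
  -- some edge of p is not in Tset
  have hexists : ∃ ed ∈ p.edges, ed ∉ Tset G v0 v1 v2 := by
    by_contra hall
    push_neg at hall
    have hsub2 : ∀ e ∈ p.edges, e ∈ (fromEdgeSet (Tset G v0 v1 v2 \ {s(v0,v2)})).edgeSet := by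
      intro e he
      have h1 := hall e he
      have h2 : e ∈ p0.edges := hedges ▸ he
      have h3 := p0.edges_subset_edgeSet h2
      rw [edgeSet_fromEdgeSet] at h3
      rw [edgeSet_fromEdgeSet]
      exact ⟨⟨h1, h3.1.2⟩, h3.2⟩
    have hr2 : (fromEdgeSet (Tset G v0 v1 v2 \ {s(v0,v2)})).Reachable v2 v1 :=
      (p.transfer _ hsub2).reachable
    have hadj : (fromEdgeSet (Tset G v0 v1 v2 \ {s(v0,v2)})).Adj v1 v0 := by
      refine (fromEdgeSet_adj _).mpr ⟨⟨⟨v1, hG.2.1.symm, ?_⟩, ?_⟩, hG.2.1.symm⟩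
      · rw [par_v1 hG, Sym2.eq_swap]
      · rw [Set.mem_singleton_iff]
        intro hcon
        rcases Sym2.eq_iff.mp hcon with ⟨ha, hb⟩ | ⟨ha, hb⟩
        · exact hG.2.1 ha.symm
        · exact hG.2.2.2.1 ha
    have hr3 : (fromEdgeSet (Tset G v0 v1 v2 \ {s(v0,v2)})).Reachable v2 v0 :=
      hr2.trans hadj.reachable
    have : (s(v0,v2) : Sym2 V) = s(par G v0 v1 v2 v2, v2) := by rw [par_v2 hG]
    rw [this] at hr3
    exact Tset_not_reach_root hG hG.2.2.1.symm hr3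
  obtain ⟨ed, hedmem, hedT⟩ := hexists
  obtain ⟨k, hk⟩ := List.mem_iff_getElem?.mp hedmem
  have hPex : ∃ i : ℕ, ∃ e, p.edges[i]? = some e ∧ e ∉ Tset G v0 v1 v2 := ⟨k, ed, hk, hedT⟩
  set i := Nat.find hPex with hi
  obtain ⟨e', he1', he2'⟩ := Nat.find_spec hPex
  refine ⟨p.getVert i, h02B, p, hpath, h02e, i, ?_, ⟨e', he1', he2'⟩, rfl⟩
  intro j hj e'' hj2
  by_contra hcon
  exact Nat.find_min hPex hj ⟨e'', hj2, hcon⟩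

lemma DMA_struct {v : V} (hv2 : v ≠ v2)
    (h : DoublyMarkedAt (Tset G v0 v1 v2) B v0 v1 v2 v) :
    v ≠ v0 ∧ par G v0 v1 v2 v = v2 ∧ s(par G v0 v1 v2 v, v) ∈ B ∧
      (fromEdgeSet (B \ {s(par G v0 v1 v2 v, v)})).Reachable v v1 := by
  obtain ⟨h02, p, hpath, h02e, i, hpre, ⟨ed, hedi, hednT⟩, hvi⟩ := h
  have hi0 : i ≠ 0 := by
    rintro rfl
    rw [Walk.getVert_zero] at hvi
    exact hv2 hvi
  cases p with
  | nil => simp at hedi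
  | @cons _ w _ hadj q =>
    have hedges : (Walk.cons hadj q).edges = s(v2, w) :: q.edges := Walk.edges_cons _ _
    have hT0 : s(v2, w) ∈ Tset G v0 v1 v2 := by
      refine hpre 0 (by omega) _ ?_
      rw [hedges]
      simp
    have h02ne : (s(v2,w) : Sym2 V) ≠ s(v0,v2) := by
      intro hcon
      refine h02e ?_
      rw [hedges, ← hcon]
      exact List.mem_cons_self
    have hw0 : w ≠ v0 ∧ v2 = par G v0 v1 v2 w := by
      rcases Tset_shape hG hT0 with ⟨h1, h2⟩ | h1
      · exfalso
        rw [h2, par_v2 hG] at h02ne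
        exact h02ne (Sym2.eq_swap ..)
      · exact h1
    have hqpath : q.IsPath ∧ v2 ∉ q.support := by
      rw [Walk.cons_isPath_iff] at hpath
      exact hpath
    have hilen : i < q.length + 1 := by
      have := (List.getElem?_eq_some_iff.mp hedi).1
      rw [hedges] at this
      simpa [Walk.length_edges] using this
    have hi1 : i = 1 := by
      by_contra hi1
      have hi2 : 2 ≤ i := by omega
      -- q is a cons
      cases q with
      | nil => simp at hilen; omega
      | @cons _ w' _ hadj' q' =>
        have hT1 : s(w, w') ∈ Tset G v0 v1 v2 := by
          refine hpre 1 (by omega) _ ?_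
          rw [hedges, Walk.edges_cons]
          simp
        rcases Tset_shape hG hT1 with ⟨h1, h2⟩ | ⟨h1, h2⟩
        · -- w' = par w = v2 : support duplication
          rw [← hw0.2] at h2
          refine hqpath.2 ?_
          rw [← h2]
          rw [Walk.support_cons]
          exact List.mem_cons_of_mem _ (Walk.start_mem_support q')
        · -- w = par w' ∈ {v0,v1,v2}
          rcases par_cases (G := G) (v0 := v0) (v1 := v1) (v2 := v2) w' with hp | hp | hp
          · rw [hp] at h2
            rw [h2, Sym2.eq_swap] at h02ne
            exact h02ne rfl
          · -- w = v1 : path from v1 to v1 must be nil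
            rw [hp] at h2
            have hcp : (Walk.cons hadj' q').IsPath := hqpath.1
            rw [Walk.cons_isPath_iff] at hcp
            refine hcp.2 ?_
            rw [h2]
            exact Walk.end_mem_support q'
          · rw [hp] at h2
            refine hqpath.2 ?_
            rw [← h2]
            exact Walk.start_mem_support _
    subst hi1
    have hv : v = w := by
      rw [Walk.getVert_cons_succ, Walk.getVert_zero] at hvi
      exact hvi
    subst hv
    refine ⟨hw0.1, hw0.2.symm, ?_, ?_⟩
    · rw [← hw0.2]
      exact ((fromEdgeSet_adj _).mp hadj).1
    · rw [← hw0.2]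
      have hnodup : s(v2,v) ∉ q.edges := by
        have := hpath.isTrail.edges_nodup
        rw [hedges, List.nodup_cons] at this
        exact this.1
      have hsub : ∀ e ∈ q.edges, e ∈ (fromEdgeSet (B \ {s(v2,v)})).edgeSet := by
        intro e he
        have h1 := q.edges_subset_edgeSet he
        rw [edgeSet_fromEdgeSet] at h1 ⊢
        refine ⟨⟨h1.1, ?_⟩, h1.2⟩
        rw [Set.mem_singleton_iff]
        rintro rfl
        exact hnodup he
      have := (q.transfer _ hsub).reachable
      exact this.symm.symm
end DMA
end St10
namespace St10
set_option linter.unusedSectionVars false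
set_option linter.unusedVariables false
open SimpleGraph

variable {V : Type} [Fintype V] [LinearOrder V] [LinearOrder (Sym2 V)]

lemma cut_not_reach {B : Set (Sym2 V)} (hac : (fromEdgeSet B).IsAcyclic) {a b : V}
    (he : s(a,b) ∈ B) (hne : a ≠ b) {c d : V}
    (hc : (fromEdgeSet (B \ {s(a,b)})).Reachable a c)
    (hd : (fromEdgeSet (B \ {s(a,b)})).Reachable b d) :
    ¬ (fromEdgeSet (B \ {s(a,b)})).Reachable c d := fun h =>
  acyclic_del hac he hne ((hc.trans h).trans hd.symm)

lemma cut_not_mem {G : SimpleGraph V} {B : Set (Sym2 V)} (hB : IsSpanningTree G B)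
    {a b : V} (he : s(a,b) ∈ B) (hne : a ≠ b) {c d : V}
    (hc : (fromEdgeSet (B \ {s(a,b)})).Reachable a c)
    (hd : (fromEdgeSet (B \ {s(a,b)})).Reachable b d)
    (hfe : s(c,d) ≠ s(a,b)) : s(c,d) ∉ B := by
  intro hmem
  have hcd : c ≠ d := ne_of_mem_edges hB.1 hmem
  have hadj : (fromEdgeSet (B \ {s(a,b)})).Adj c d :=
    (fromEdgeSet_adj _).mpr ⟨⟨hmem, hfe⟩, hcd⟩
  exact cut_not_reach hB.2.IsAcyclic he hne hc hd hadj.reachable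

lemma mk_passive {G : SimpleGraph V} {B : Set (Sym2 V)} (hB : IsSpanningTree G B)
    {a b : V} (he : s(a,b) ∈ B) (hne : a ≠ b) {c d : V}
    (hc : (fromEdgeSet (B \ {s(a,b)})).Reachable a c)
    (hd : (fromEdgeSet (B \ {s(a,b)})).Reachable b d)
    (hfE : s(c,d) ∈ G.edgeSet) (hlt : s(c,d) < s(a,b)) :
    InternallyPassive G B s(a,b) := by
  have hfe : s(c,d) ≠ s(a,b) := ne_of_lt hlt
  exact (passive_iff hB he).mpr ⟨c, d, hfE, cut_not_mem hB he hne hc hd hfe, hlt,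
    cut_not_reach hB.2.IsAcyclic he hne hc hd⟩

section MainCases
variable {G : SimpleGraph V} {v0 v1 v2 : V}
  (hG : IsTriconed G v0 v1 v2) (hvo : VertexOrderSpec G v0 v1 v2)
  (heo : EdgeOrderSpec G v0 v1 v2)
  {B : Set (Sym2 V)} (hB : IsSpanningTree G B)
include hG hB

/-- every edge of B outside the minimum spanning tree is internally passive -/
lemma dirD (heo' : EdgeOrderSpec G v0 v1 v2) {e : Sym2 V} (heB : e ∈ B)
    (hnT : e ∉ Tset G v0 v1 v2) : InternallyPassive G B e := by
  induction e using Sym2.ind with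
  | _ a b =>
    have hne : a ≠ b := ne_of_mem_edges hB.1 heB
    have hnr : ¬ (fromEdgeSet (B \ {s(a,b)})).Reachable a b :=
      acyclic_del hB.2.IsAcyclic heB hne
    obtain ⟨w⟩ := (Tset_spanning hG).2.isConnected.preconnected a b
    obtain ⟨c, d, hcdT, hcd, hQc, hQd⟩ :=
      walk_cross (fun t => (fromEdgeSet (B \ {s(a,b)})).Reachable a t) w (Reachable.refl a) hnr
    have hfE : s(c,d) ∈ G.edgeSet := Tset_subset hG hcdT
    have hfne : s(c,d) ≠ s(a,b) := fun h => hnT (h ▸ hcdT)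
    have hfnB : s(c,d) ∉ B := by
      intro hmem
      have hadj : (fromEdgeSet (B \ {s(a,b)})).Adj c d :=
        (fromEdgeSet_adj _).mpr ⟨⟨hmem, hfne⟩, hcd⟩
      exact hQd (hQc.trans hadj.reachable)
    have hflt : s(c,d) < s(a,b) := by
      refine heo'.1 _ hfE _ (hB.1 heB) ?_
      rw [block_three hG (hB.1 heB) hnT]
      have := block_le2_of_Tset hG hcdT
      omega
    refine (passive_iff hB heB).mpr ⟨c, d, hfE, hfnB, hflt, ?_⟩
    intro h
    exact hQd (hQc.trans h)

include hvo heo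

lemma notIP_01 (h01B : s(v0,v1) ∈ B) : ¬ InternallyPassive G B s(v0,v1) := by
  rintro ⟨-, f, hfE, hfB, hlt, -⟩
  have hne : f ≠ s(v0,v1) := fun h => hfB (h ▸ h01B)
  exact lt_asymm hlt (lt_01 hG hvo heo hfE hne)

lemma IP02_iff {E : Set (Sym2 V)} {m : V → ℕ}
    (hphi : IsPhi1 G v0 v1 v2 (Tset G v0 v1 v2) B E m) (h02B : s(v0,v2) ∈ B) :
    InternallyPassive G B s(v0,v2) ↔ ∃ v, m v = 2 := by
  have h0212 : (s(v0,v1) : Sym2 V) ≠ s(v0,v2) := by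
    intro h
    rcases Sym2.eq_iff.mp h with ⟨-, h2⟩ | ⟨h1, -⟩
    · exact hG.2.2.2.1 h2
    · exact hG.2.2.1 h1
  constructor
  · rintro hIP
    obtain ⟨c, d, hfE, hfB, hlt, hfnr⟩ := (passive_iff hB h02B).mp hIP
    have hf01 : s(c,d) = s(v0,v1) := by
      by_contra hne
      have hne2 : s(c,d) ≠ s(v0,v2) := fun h => hfB (h ▸ h02B)
      exact lt_asymm hlt (lt_02 hG hvo heo hfE hne hne2)
    -- v1 is on the v2 side
    have hnr01 : ¬ (fromEdgeSet (B \ {s(v0,v2)})).Reachable v0 v1 := by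
      rcases Sym2.eq_iff.mp hf01 with ⟨h1, h2⟩ | ⟨h1, h2⟩
      · exact fun h => hfnr (by rw [h1, h2]; exact h)
      · exact fun h => hfnr (by rw [h1, h2]; exact h.symm)
    have hr21 : (fromEdgeSet (B \ {s(v0,v2)})).Reachable v2 v1 := by
      rcases reach_or hB.2.isConnected.preconnected h02B v1 with h | h
      · exact absurd h hnr01
      · exact h
    obtain ⟨v, hdma⟩ := exists_DMA hG hB h02B hr21
    exact ⟨v, (hphi.2.2.2 v).mpr hdma⟩
  · rintro ⟨v, hm2⟩
    obtain ⟨h02, p, hpath, h02e, -⟩ := (hphi.2.2.2 v).mp hm2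
    have hsub : ∀ e ∈ p.edges, e ∈ (fromEdgeSet (B \ {s(v0,v2)})).edgeSet := by
      intro e he
      have h1 := p.edges_subset_edgeSet he
      rw [edgeSet_fromEdgeSet] at h1 ⊢
      refine ⟨⟨h1.1, ?_⟩, h1.2⟩
      rw [Set.mem_singleton_iff]
      rintro rfl
      exact h02e he
    have hr21 : (fromEdgeSet (B \ {s(v0,v2)})).Reachable v2 v1 := (p.transfer _ hsub).reachable
    have hnr01 : ¬ (fromEdgeSet (B \ {s(v0,v2)})).Reachable v0 v1 := by
      intro h
      exact acyclic_del hB.2.IsAcyclic h02B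
        (fun hh => G.loopless.irrefl v0 (hh ▸ hG.2.2.2.2.2.1)) (h.trans hr21.symm)
    have h01nB : s(v0,v1) ∉ B := by
      intro hmem
      refine hnr01 (Adj.reachable ?_)
      exact (fromEdgeSet_adj _).mpr ⟨⟨hmem, h0212⟩, hG.2.1⟩
    refine (passive_iff hB h02B).mpr ⟨v0, v1, hG.2.2.2.2.1, h01nB, ?_, hnr01⟩
    exact lt_01 hG hvo heo hG.2.2.2.2.2.1 (Ne.symm h0212)

end MainCases
end St10
namespace St10
set_option linter.unusedSectionVars false
set_option linter.unusedVariables false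
open SimpleGraph

variable {V : Type} [Fintype V] [LinearOrder V] [LinearOrder (Sym2 V)]

section ConeCase
variable {G : SimpleGraph V} {v0 v1 v2 : V}
  (hG : IsTriconed G v0 v1 v2) (hvo : VertexOrderSpec G v0 v1 v2)
  (heo : EdgeOrderSpec G v0 v1 v2)
  {B E : Set (Sym2 V)} {m : V → ℕ} (hB : IsSpanningTree G B)
  (hphi : IsPhi1 G v0 v1 v2 (Tset G v0 v1 v2) B E m)
include hG hB hphi

lemma fail_of_reach {x : V} (hx0 : x ≠ v0) (hx1 : x ≠ v1) (hx2 : x ≠ v2)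
    (heB : s(par G v0 v1 v2 x, x) ∈ B) {z' : V}
    (hz' : (fromEdgeSet (B \ {s(par G v0 v1 v2 x, x)})).Reachable x z')
    (hcase : z' = v0 ∨ z' < x) :
    ¬(compMarks E m x = 1 ∧ ∀ u, (fromEdgeSet E).Reachable x u → x ≤ u) := by
  rintro ⟨hcm, hmin⟩
  have hm1 : 1 ≤ m x := (mark_pos_iff hG hphi x).mpr
    (Or.inr (Or.inr ⟨hx0, by rw [Sym2.eq_swap]; exact heB⟩))
  obtain ⟨w⟩ := hz'
  by_cases hQ : (fromEdgeSet E).Reachable x z'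
  · have hz0 : z' ≠ v0 := reach_E_ne_v0 hG hphi hx0 hQ
    have hlt : z' < x := hcase.resolve_left hz0
    exact absurd (hmin z' hQ) (not_le.mpr hlt)
  · obtain ⟨c, d, hcd, hne, hQc, hQd⟩ :=
      walk_cross (fun t => (fromEdgeSet E).Reachable x t) w (Reachable.refl x) hQ
    have hcdB : s(c,d) ∈ B := hcd.1
    have hcdne : s(c,d) ∉ ({s(par G v0 v1 v2 x, x)} : Set (Sym2 V)) := hcd.2
    rw [Set.mem_singleton_iff] at hcdne
    have hcdE : s(c,d) ∉ E := by
      intro hmem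
      exact hQd (hQc.trans (Adj.reachable ((fromEdgeSet_adj _).mpr ⟨hmem, hne⟩)))
    have hcdT : s(c,d) ∈ Tset G v0 v1 v2 := by
      by_contra hnT
      exact hcdE (mem_E_of_B_not_T hG hphi hB.1 hcdB hnT)
    have hc0 : c ≠ v0 := reach_E_ne_v0 hG hphi hx0 hQc
    rcases Tset_shape hG hcdT with ⟨h1, h2⟩ | ⟨h1, h2⟩
    · -- d = par c, c is a marked child
      have hmc : 1 ≤ m c := (mark_pos_iff hG hphi c).mpr
        (Or.inr (Or.inr ⟨h1, by rw [← h2]; exact hcdB⟩))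
      have hcx : c ≠ x := by
        rintro rfl
        exact hcdne (by rw [h2]; exact Sym2.eq_swap ..)
      have := compMarks_ge_two hm1 hmc hQc hcx
      omega
    · -- c = par d is special
      have hcx : c ≠ x := by
        rintro rfl
        rcases par_cases (G := G) (v0:=v0) (v1:=v1) (v2:=v2) d with hp | hp | hp
        · exact hx0 (h2.trans hp)
        · exact hx1 (h2.trans hp)
        · exact hx2 (h2.trans hp)
      have hmc : 1 ≤ m c := by
        rcases par_cases (G := G) (v0:=v0) (v1:=v1) (v2:=v2) d with hp | hp | hp
        · exact absurd (h2.trans hp) hc0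
        · exact (mark_pos_iff hG hphi c).mpr (Or.inl (h2.trans hp))
        · exact (mark_pos_iff hG hphi c).mpr (Or.inr (Or.inl (h2.trans hp)))
      have := compMarks_ge_two hm1 hmc hQc hcx
      omega

include hvo heo

lemma dirB {x : V} (hx0 : x ≠ v0) (hx1 : x ≠ v1) (hx2 : x ≠ v2)
    (heB : s(par G v0 v1 v2 x, x) ∈ B)
    (hIP : InternallyPassive G B s(par G v0 v1 v2 x, x)) :
    ¬(compMarks E m x = 1 ∧ ∀ u, (fromEdgeSet E).Reachable x u → x ≤ u) := by
  obtain ⟨c, d, hfE, hfB, hflt, hfnr⟩ := (passive_iff hB heB).mp hIP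
  obtain ⟨z, hz0, hfeq, hzx⟩ := lt_cone_elim hG hvo heo hfE hx0 hx1 hx2 hflt
  have hsid := reach_or hB.2.isConnected.preconnected heB
  have hparlt : par G v0 v1 v2 z = v0 ∨ par G v0 v1 v2 z < x := by
    rcases par_cases (G := G) (v0:=v0) (v1:=v1) (v2:=v2) z with hp | hp | hp
    · exact Or.inl hp
    · exact Or.inr (by rw [hp]; exact v1_lt_normal hG hvo hx0 hx1 hx2)
    · exact Or.inr (by rw [hp]; exact v2_lt_normal hG hvo hx0 hx1 hx2)
  have hone : ∃ z', (fromEdgeSet (B \ {s(par G v0 v1 v2 x, x)})).Reachable x z' ∧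
      (z' = v0 ∨ z' < x) := by
    have hcx : (fromEdgeSet (B \ {s(par G v0 v1 v2 x, x)})).Reachable x c ∨
        (fromEdgeSet (B \ {s(par G v0 v1 v2 x, x)})).Reachable x d := by
      rcases hsid c with h1 | h1
      · rcases hsid d with h2 | h2
        · exact absurd (h1.symm.trans h2) hfnr
        · exact Or.inr h2
      · exact Or.inl h1
    rcases Sym2.eq_iff.mp hfeq with ⟨h1, h2⟩ | ⟨h1, h2⟩
    · rcases hcx with h | h
      · exact ⟨c, h, by rw [h1]; exact hparlt⟩
      · exact ⟨d, h, Or.inr (by rw [h2]; exact hzx)⟩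
    · rcases hcx with h | h
      · exact ⟨c, h, Or.inr (by rw [h1]; exact hzx)⟩
      · exact ⟨d, h, by rw [h2]; exact hparlt⟩
  obtain ⟨z', hz'1, hz'2⟩ := hone
  exact fail_of_reach hG hB hphi hx0 hx1 hx2 heB hz'1 hz'2

lemma dirA {x : V} (hx0 : x ≠ v0) (hx1 : x ≠ v1) (hx2 : x ≠ v2)
    (heB : s(par G v0 v1 v2 x, x) ∈ B)
    (hfail : ¬(compMarks E m x = 1 ∧ ∀ u, (fromEdgeSet E).Reachable x u → x ≤ u)) :
    InternallyPassive G B s(par G v0 v1 v2 x, x) := by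
  have hnepx : par G v0 v1 v2 x ≠ x := par_ne hG hx0
  have hnr : ¬ (fromEdgeSet (B \ {s(par G v0 v1 v2 x, x)})).Reachable (par G v0 v1 v2 x) x :=
    acyclic_del hB.2.IsAcyclic heB hnepx
  have hsid := reach_or hB.2.isConnected.preconnected heB
  by_cases hv0 : (fromEdgeSet (B \ {s(par G v0 v1 v2 x, x)})).Reachable x v0
  · -- v0 on the x side : use the cone edge of par x
    have hpx0 : par G v0 v1 v2 x ≠ v0 := by
      intro hpeq
      rw [hpeq] at hnr
      rw [hpeq] at hv0
      exact hnr hv0.symm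
    have hppx : par G v0 v1 v2 (par G v0 v1 v2 x) = v0 := by
      rcases par_cases (G := G) (v0:=v0) (v1:=v1) (v2:=v2) x with hp | hp | hp
      · exact absurd hp hpx0
      · rw [hp]; exact par_v1 hG
      · rw [hp]; exact par_v2 hG
    have hplt : par G v0 v1 v2 x < x := by
      rcases par_cases (G := G) (v0:=v0) (v1:=v1) (v2:=v2) x with hp | hp | hp
      · exact absurd hp hpx0
      · rw [hp]; exact v1_lt_normal hG hvo hx0 hx1 hx2
      · rw [hp]; exact v2_lt_normal hG hvo hx0 hx1 hx2
    have hswap : (s(par G v0 v1 v2 x, v0) : Sym2 V) =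
        s(par G v0 v1 v2 (par G v0 v1 v2 x), par G v0 v1 v2 x) := by
      rw [hppx]
      exact Sym2.eq_swap ..
    refine mk_passive hB heB hnepx (Reachable.refl _) hv0 ?_ ?_
    · rw [hswap]
      exact padj hG hpx0
    · rw [hswap]
      exact cone_lt_cone hG hvo heo hpx0 hx0 hx1 hx2 hplt
  · have hRv0 : (fromEdgeSet (B \ {s(par G v0 v1 v2 x, x)})).Reachable (par G v0 v1 v2 x) v0 :=
      (hsid v0).resolve_right hv0
    by_cases hv1r : (fromEdgeSet (B \ {s(par G v0 v1 v2 x, x)})).Reachable x v1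
    · -- v1 on the x side : use the edge 01
      have h01 : (s(v0,v1) : Sym2 V) = s(par G v0 v1 v2 v1, v1) := by rw [par_v1 hG]
      refine mk_passive hB heB hnepx hRv0 hv1r ?_ ?_
      · exact hG.2.2.2.2.1
      · rw [h01]
        exact cone_lt_cone hG hvo heo hG.2.1.symm hx0 hx1 hx2
          (v1_lt_normal hG hvo hx0 hx1 hx2)
    · have hRv1 : (fromEdgeSet (B \ {s(par G v0 v1 v2 x, x)})).Reachable (par G v0 v1 v2 x) v1 :=
        (hsid v1).resolve_right hv1r
      by_cases hv2r : (fromEdgeSet (B \ {s(par G v0 v1 v2 x, x)})).Reachable x v2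
      · have h02 : (s(v0,v2) : Sym2 V) = s(par G v0 v1 v2 v2, v2) := by rw [par_v2 hG]
        refine mk_passive hB heB hnepx hRv0 hv2r ?_ ?_
        · exact hG.2.2.2.2.2.1
        · rw [h02]
          exact cone_lt_cone hG hvo heo hG.2.2.1.symm hx0 hx1 hx2
            (v2_lt_normal hG hvo hx0 hx1 hx2)
      · -- all of v0, v1, v2 are on the root side
        have hRv2 : (fromEdgeSet (B \ {s(par G v0 v1 v2 x, x)})).Reachable (par G v0 v1 v2 x) v2 :=
          (hsid v2).resolve_right hv2r
        have hm1 : 1 ≤ m x := (mark_pos_iff hG hphi x).mpr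
          (Or.inr (Or.inr ⟨hx0, by rw [Sym2.eq_swap]; exact heB⟩))
        have hcm1 : 1 ≤ compMarks E m x := compMarks_ge_one hm1
        have hEle : fromEdgeSet E ≤ fromEdgeSet (B \ {s(par G v0 v1 v2 x, x)}) := by
          refine fromEdgeSet_mono ?_
          intro e' he'
          refine ⟨(E_sub hG hphi he').1, ?_⟩
          rw [Set.mem_singleton_iff]
          intro hh
          exact (E_sub hG hphi he').2 (hh ▸ ⟨x, hx0, rfl⟩)
        rcases not_and_or.mp hfail with hcm | hmin
        · exfalso
          have h2 : 2 ≤ compMarks E m x := by omega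
          rcases compMarks_cases h2 with hmx2 | ⟨c, hcx, hrc, hmc⟩
          · have hm2 : m x = 2 := le_antisymm (hphi.2.1 x) hmx2
            obtain ⟨hv0x, hpxv2, hcone, hreach⟩ := DMA_struct hG hB hx2 ((hphi.2.2.2 x).mp hm2)
            exact hv1r hreach
          · have hc0 : c ≠ v0 := reach_E_ne_v0 hG hphi hx0 hrc
            have hrc' : (fromEdgeSet (B \ {s(par G v0 v1 v2 x, x)})).Reachable x c :=
              hrc.mono hEle
            rcases (mark_pos_iff hG hphi c).mp hmc with rfl | rfl | ⟨hcc0, hcB⟩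
            · exact hv1r hrc'
            · exact hv2r hrc'
            · have hcone_ne : (s(c, par G v0 v1 v2 c) : Sym2 V) ≠ s(par G v0 v1 v2 x, x) := by
                intro hcon
                rcases Sym2.eq_iff.mp hcon with ⟨h1, h2⟩ | ⟨h1, h2⟩
                · rw [h1] at hrc'
                  exact hnr hrc'.symm
                · exact hcx h1
              have hadj : (fromEdgeSet (B \ {s(par G v0 v1 v2 x, x)})).Adj c
                  (par G v0 v1 v2 c) :=
                (fromEdgeSet_adj _).mpr ⟨⟨hcB, hcone_ne⟩, (par_ne hG hcc0).symm⟩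
              have hrpc := hrc'.trans hadj.reachable
              rcases par_cases (G := G) (v0:=v0) (v1:=v1) (v2:=v2) c with hp | hp | hp
              · rw [hp] at hrpc; exact hv0 hrpc
              · rw [hp] at hrpc; exact hv1r hrpc
              · rw [hp] at hrpc; exact hv2r hrpc
        · push_neg at hmin
          obtain ⟨u, hru, hux⟩ := hmin
          have hu0 : u ≠ v0 := reach_E_ne_v0 hG hphi hx0 hru
          have hru' : (fromEdgeSet (B \ {s(par G v0 v1 v2 x, x)})).Reachable x u :=
            hru.mono hEle
          have hu1 : u ≠ v1 := by rintro rfl; exact hv1r hru'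
          have hu2 : u ≠ v2 := by rintro rfl; exact hv2r hru'
          have hlt2 : s(par G v0 v1 v2 u, u) < s(par G v0 v1 v2 x, x) :=
            cone_lt_cone hG hvo heo hu0 hx0 hx1 hx2 hux
          have hRpu : (fromEdgeSet (B \ {s(par G v0 v1 v2 x, x)})).Reachable
              (par G v0 v1 v2 x) (par G v0 v1 v2 u) := by
            rcases par_cases (G := G) (v0:=v0) (v1:=v1) (v2:=v2) u with hp | hp | hp
            · rw [hp]; exact hRv0
            · rw [hp]; exact hRv1
            · rw [hp]; exact hRv2
          exact mk_passive hB heB hnepx hRpu hru' (padj hG hu0) hlt2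

end ConeCase
end St10
section Statements

variable (G : SimpleGraph V) (v0 v1 v2 : V) (B0 : Set (Sym2 V))

theorem statement10
    (hG : IsTriconed G v0 v1 v2)
    (hvo : VertexOrderSpec G v0 v1 v2)
    (heo : EdgeOrderSpec G v0 v1 v2)
    (hnc : NoColoops G)
    (hB0 : IsMinSpanningTree G B0)
    (B : Set (Sym2 V)) (hB : IsSpanningTree G B)
    (E : Set (Sym2 V)) (m : V → ℕ)
    (hphi : IsPhi1 G v0 v1 v2 B0 B E m) :
    (∀ e ∈ B, (¬InternallyPassive G B e ↔
      (e = s(v0, v1) ∨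
        (e = s(v0, v2) ∧ ∀ v, m v ≤ 1) ∨
        (e ∈ B0 ∧ e ≠ s(v0, v1) ∧ e ≠ s(v0, v2) ∧
          ∃ v p, IsChildOf B0 v0 v p ∧ e = s(v, p) ∧ 1 ≤ m v ∧
            compMarks E m v = 1 ∧
            ∀ u, (SimpleGraph.fromEdgeSet E).Reachable v u → v ≤ u)))) ∧
    ∀ e ∈ B, e ∉ B0 → InternallyPassive G B e := by
  classical
  have hBT : B0 = St10.Tset G v0 v1 v2 := St10.B0_eq hG heo hB0
  subst hBT
  constructor
  · intro e heB
    by_cases he01 : e = s(v0,v1)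
    · subst he01
      exact ⟨fun _ => Or.inl rfl, fun _ => St10.notIP_01 hG hvo heo hB heB⟩
    by_cases he02 : e = s(v0,v2)
    · subst he02
      constructor
      · intro hnIP
        refine Or.inr (Or.inl ⟨rfl, ?_⟩)
        intro v
        by_contra hv
        push_neg at hv
        have h2 : m v = 2 := le_antisymm (hphi.2.1 v) hv
        exact hnIP ((St10.IP02_iff hG hvo heo hB hphi heB).mpr ⟨v, h2⟩)
      · rintro (h | ⟨-, hall⟩ | ⟨-, -, hne, -⟩) hIP
        · rcases Sym2.eq_iff.mp h with ⟨-, h2⟩ | ⟨h1, -⟩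
          · exact hG.2.2.2.1 h2.symm
          · exact hG.2.1 h1
        · obtain ⟨v, hv⟩ := (St10.IP02_iff hG hvo heo hB hphi heB).mp hIP
          have := hall v
          omega
        · exact hne rfl
    by_cases heT : e ∈ St10.Tset G v0 v1 v2
    · obtain ⟨x, hx0, rfl⟩ := heT
      have hx1 : x ≠ v1 := by
        rintro rfl
        exact he01 (by rw [St10.par_v1 hG])
      have hx2 : x ≠ v2 := by
        rintro rfl
        exact he02 (by rw [St10.par_v2 hG])
      constructor
      · intro hnIP
        have hRHS : compMarks E m x = 1 ∧
            ∀ u, (SimpleGraph.fromEdgeSet E).Reachable x u → x ≤ u := by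
          by_contra hf
          exact hnIP (St10.dirA hG hvo heo hB hphi hx0 hx1 hx2 heB hf)
        refine Or.inr (Or.inr ⟨⟨x, hx0, rfl⟩, he01, he02, x, St10.par G v0 v1 v2 x,
          St10.child_par hG hx0, Sym2.eq_swap .., ?_, hRHS.1, hRHS.2⟩)
        exact (St10.mark_pos_iff hG hphi x).mpr
          (Or.inr (Or.inr ⟨hx0, by rw [Sym2.eq_swap]; exact heB⟩))
      · rintro (h | ⟨h, -⟩ | ⟨-, -, -, v, p, hch, hev, -, hcm, hmin⟩) hIP
        · exact he01 h
        · exact he02 h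
        · obtain ⟨hv0', hpv⟩ := St10.child_elim hG hch
          have hxv : x = v :=
            St10.par_inj hG hx0 hv0'
              (hev.trans (by rw [hpv]; exact Sym2.eq_swap ..))
          subst hxv
          exact St10.dirB hG hvo heo hB hphi hx0 hx1 hx2 heB hIP ⟨hcm, hmin⟩
    · constructor
      · intro hnIP
        exact absurd (St10.dirD hG hB heo heB heT) hnIP
      · rintro (h | ⟨h, -⟩ | ⟨h, -⟩) hIP
        · exact heT (by rw [h]; exact ⟨v1, hG.2.1.symm, by rw [St10.par_v1 hG]⟩)
        · exact heT (by rw [h]; exact ⟨v2, hG.2.2.1.symm, by rw [St10.par_v2 hG]⟩)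
        · exact heT h
  · intro e heB hnT
    exact St10.dirD hG hB heo heB hnT

end Statements
end

section
/- Let τ be a set and let a, b, c ∈ τ be pairwise distinct. Let k ≥ 1 and let t : {0, 1, …, k} → τ satisfy t(0) = c and t(k) = a. Then there exists an index i with 0 ≤ i < k such that t(i) ≠ a and t(i+1) ≠ b; moreover, the least such index i satisfies t(j) = b for every j with 0 < j ≤ i. -/
theorem statement12 {τ : Type*} (a b c : τ) (hab : a ≠ b) (hac : a ≠ c) (hbc : b ≠ c)
    (k : ℕ) (hk : 1 ≤ k) (t : ℕ → τ) (h0 : t 0 = c) (hka : t k = a) :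
    ∃ i, (i < k ∧ t i ≠ a ∧ t (i + 1) ≠ b) ∧
      (∀ j < i, ¬(t j ≠ a ∧ t (j + 1) ≠ b)) ∧
      (∀ j, 0 < j → j ≤ i → t j = b) := by
  classical
  have hne : ∃ i, i < k ∧ t i ≠ a ∧ t (i + 1) ≠ b := by
    by_contra h
    push_neg at h
    have key : ∀ j, j ≤ k → 0 < j → t j = b := by
      intro j
      induction j with
      | zero => omega
      | succ n ih =>
        intro hj _
        rcases Nat.eq_zero_or_pos n with h0n | h0n
        · subst h0n
          exact h 0 (by omega) (by rw [h0]; exact fun e => hac e.symm)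
        · have hb := ih (by omega) h0n
          exact h n (by omega) (by rw [hb]; exact fun e => hab e.symm)
    have := key k le_rfl (by omega)
    rw [hka] at this; exact hab this
  set i := Nat.find hne with hi
  have hspec := Nat.find_spec hne
  refine ⟨i, hspec, fun j hj hp => Nat.find_min hne hj ⟨by omega, hp.1, hp.2⟩, ?_⟩
  intro j
  induction j with
  | zero => omega
  | succ n ih =>
    intro _ hji
    have hmin := Nat.find_min hne (m := n) (by omega)
    push_neg at hmin
    rcases Nat.eq_zero_or_pos n with h0n | h0n
    · subst h0n
      exact hmin (by omega) (by rw [h0]; exact fun e => hac e.symm)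
    · have hb := ih h0n (by omega)
      exact hmin (by omega) (by rw [hb]; exact fun e => hab e.symm)
end
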